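/- arXiv:math/0506050 — 2 statements merged into one kernel-verified Lean document; each statement's English description precedes it below -/
import Mathlib

section
/- Let n be an even positive integer and let J be the Jordan subalgebra of H(F_n) consisting of all block matrices [[A,B],[-B,A]] with A a symmetric matrix of order n/2 and B a skew-symmetric matrix of order n/2 (this J is isomorphic to F_{n/2}^(+)). Then every Jordan algebra automorphism of J is induced by an automorphism of H(F_n); concretely, for every automorphism φ of J there exists a matrix Q of order n with Q^t Q = I (an orthogonal matrix) such that φ(X) = Q^{-1} X Q for all X in J. -/
open Matrix

/-- The Jordan (circle) product `A ∘ B = (AB + BA)/2` on square matrices. -/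
noncomputable def jmul {F : Type*} [Field F] {k : Type*} [Fintype k]
    (A B : Matrix k k F) : Matrix k k F :=
  (2 : F)⁻¹ • (A * B + B * A)

/-- A linear subspace of matrices closed under the Jordan product. -/
def IsJordanSubalgebra {F : Type*} [Field F] {k : Type*} [Fintype k]
    (S : Submodule F (Matrix k k F)) : Prop :=
  ∀ x ∈ S, ∀ y ∈ S, jmul x y ∈ S

/-- Two subspaces of (possibly different) matrix spaces are isomorphic as
Jordan algebras. -/
def JordanIso {F : Type*} [Field F] {a b : Type*} [Fintype a] [Fintype b]
    (S : Submodule F (Matrix a a F)) (T : Submodule F (Matrix b b F)) : Prop :=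
  ∃ e : S ≃ₗ[F] T, ∀ x y z : S,
    jmul (x : Matrix a a F) (y : Matrix a a F) = (z : Matrix a a F) →
    jmul (e x : Matrix b b F) (e y : Matrix b b F) = (e z : Matrix b b F)

/-- The Jordan algebra `H(F_k)` of symmetric matrices. -/
def symmSub (k : Type*) [Fintype k] (F : Type*) [Field F] :
    Submodule F (Matrix k k F) where
  carrier := {X | Xᵀ = X}
  add_mem' := by
    intro a b ha hb
    simp only [Set.mem_setOf_eq, Matrix.transpose_add] at *
    rw [ha, hb]
  zero_mem' := Matrix.transpose_zero
  smul_mem' := by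
    intro c a ha
    simp only [Set.mem_setOf_eq, Matrix.transpose_smul] at *
    rw [ha]

/-- The matrix `S = [[0, I],[-I, 0]]` of the symplectic involution. -/
def sympMat (n : ℕ) (F : Type*) [Field F] :
    Matrix (Fin n ⊕ Fin n) (Fin n ⊕ Fin n) F :=
  Matrix.fromBlocks 0 1 (-1) 0

/-- The Jordan algebra `H(F_{2n}, j)` of matrices fixed by the symplectic
involution `j(X) = S⁻¹ Xᵀ S`, i.e. `Xᵀ S = S X`. -/
def sympSub (n : ℕ) (F : Type*) [Field F] :
    Submodule F (Matrix (Fin n ⊕ Fin n) (Fin n ⊕ Fin n) F) where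
  carrier := {X | Xᵀ * sympMat n F = sympMat n F * X}
  add_mem' := by
    intro a b ha hb
    simp only [Set.mem_setOf_eq, Matrix.transpose_add, add_mul, mul_add] at *
    rw [ha, hb]
  zero_mem' := by simp
  smul_mem' := by
    intro c a ha
    simp only [Set.mem_setOf_eq, Matrix.transpose_smul, Matrix.smul_mul,
      Matrix.mul_smul] at *
    rw [ha]

/-- The subalgebra of `H(F_{2m})` of block matrices `[[A,B],[-B,A]]`,
`A` symmetric, `B` skew-symmetric; it is isomorphic to `F_m^(+)`. -/
def circSub (m : ℕ) (F : Type*) [Field F] :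
    Submodule F (Matrix (Fin m ⊕ Fin m) (Fin m ⊕ Fin m) F) where
  carrier := {X | ∃ A B : Matrix (Fin m) (Fin m) F,
    Aᵀ = A ∧ Bᵀ = -B ∧ X = Matrix.fromBlocks A B (-B) A}
  add_mem' := by
    rintro x y ⟨A₁, B₁, hA₁, hB₁, rfl⟩ ⟨A₂, B₂, hA₂, hB₂, rfl⟩
    refine ⟨A₁ + A₂, B₁ + B₂, ?_, ?_, ?_⟩
    · rw [Matrix.transpose_add, hA₁, hA₂]
    · rw [Matrix.transpose_add, hB₁, hB₂, neg_add]
    · rw [Matrix.fromBlocks_add, neg_add]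
  zero_mem' := ⟨0, 0, by simp, by simp, by simp⟩
  smul_mem' := by
    rintro c x ⟨A, B, hA, hB, rfl⟩
    refine ⟨c • A, c • B, ?_, ?_, ?_⟩
    · rw [Matrix.transpose_smul, hA]
    · rw [Matrix.transpose_smul, hB, smul_neg]
    · rw [Matrix.fromBlocks_smul, smul_neg]

/-- Block-diagonal embedding: `cnt` copies of the `p × p` matrix `X` placed
from row/column `off` on, zeros elsewhere. -/
def diagEmb {F : Type*} [Field F] (n p : ℕ) (hp : 0 < p) (off cnt : ℕ)
    (X : Matrix (Fin p) (Fin p) F) : Matrix (Fin n) (Fin n) F :=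
  Matrix.of fun i j =>
    if off ≤ i.val ∧ i.val < off + cnt * p ∧ off ≤ j.val ∧ j.val < off + cnt * p
        ∧ (i.val - off) / p = (j.val - off) / p then
      X ⟨(i.val - off) % p, Nat.mod_lt _ hp⟩ ⟨(j.val - off) % p, Nat.mod_lt _ hp⟩
    else 0

/-- `diag(X, …, X, Xᵀ, …, Xᵀ, 0)` with `l` copies of `X` and `k` copies of `Xᵀ`. -/
def canonDiag {F : Type*} [Field F] (n m : ℕ) (hm : 0 < m) (l k : ℕ)
    (X : Matrix (Fin m) (Fin m) F) : Matrix (Fin n) (Fin n) F :=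
  diagEmb n m hm 0 l X + diagEmb n m hm (l * m) k Xᵀ

/-- The `2m × 2m` matrix with the four given `m × m` blocks. -/
def twoBlock {F : Type*} [Field F] (m : ℕ)
    (A B C D : Matrix (Fin m) (Fin m) F) : Matrix (Fin (2 * m)) (Fin (2 * m)) F :=
  Matrix.of fun i j =>
    if hi : i.val < m then
      if hj : j.val < m then A ⟨i.val, hi⟩ ⟨j.val, hj⟩
      else B ⟨i.val, hi⟩ ⟨j.val - m, by have := j.isLt; omega⟩
    else
      if hj : j.val < m then C ⟨i.val - m, by have := i.isLt; omega⟩ ⟨j.val, hj⟩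
      else D ⟨i.val - m, by have := i.isLt; omega⟩ ⟨j.val - m, by have := j.isLt; omega⟩

/-- The `qm × qm` matrix assembled from a `q × q` array of `m × m` blocks. -/
def bigBlock {F : Type*} [Field F] (q m : ℕ) (hm : 0 < m)
    (f : Fin q → Fin q → Matrix (Fin m) (Fin m) F) :
    Matrix (Fin (q * m)) (Fin (q * m)) F :=
  Matrix.of fun i j =>
    f ⟨i.val / m, (Nat.div_lt_iff_lt_mul hm).2 (by have := i.isLt; omega)⟩
      ⟨j.val / m, (Nat.div_lt_iff_lt_mul hm).2 (by have := j.isLt; omega)⟩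
      ⟨i.val % m, Nat.mod_lt _ hm⟩ ⟨j.val % m, Nat.mod_lt _ hm⟩

/-- A set `S` of objects has exactly `N` classes under the relation `E`. -/
def HasNumClasses {α : Type*} (S : Set α) (E : α → α → Prop) (N : ℕ) : Prop :=
  ∃ f : Fin N → α, (∀ i, f i ∈ S) ∧ (∀ i j, i ≠ j → ¬ E (f i) (f j)) ∧
    ∀ a ∈ S, ∃ i, E a (f i)


namespace Stmt0Aux
set_option linter.unusedSectionVars false
variable {F : Type*} [Field F]
variable {k : Type*} [Fintype k] [DecidableEq k]

lemma half_cancel (hF : (2:F) ≠ 0) {A B : Matrix k k F} (h : A + A = B + B) : A = B := by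
  ext i j
  have h2 : A i j + A i j = B i j + B i j := by
    have := congrFun (congrFun h i) j
    simpa [Matrix.add_apply] using this
  have : (2:F) * A i j = (2:F) * B i j := by rw [two_mul, two_mul]; exact h2
  exact mul_left_cancel₀ hF this

lemma matrix_prime {a b : Matrix k k F} (h : ∀ w : Matrix k k F, a * w * b = 0) :
    a = 0 ∨ b = 0 := by
  by_contra hc
  push_neg at hc
  obtain ⟨ha, hb⟩ := hc
  obtain ⟨i, j, hij⟩ : ∃ i j, a i j ≠ 0 := by
    by_contra h'; push_neg at h'; exact ha (by ext i j; simp [h'])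
  obtain ⟨r, s, hrs⟩ : ∃ r s, b r s ≠ 0 := by
    by_contra h'; push_neg at h'; exact hb (by ext i j; simp [h'])
  have h0 : (a * Matrix.single j r (1:F) * b) i s = 0 := by rw [h (Matrix.single j r 1)]; simp
  rw [Matrix.mul_assoc] at h0
  have h2 : (a * (Matrix.single j r (1:F) * b)) i s = a i j * b r s := by
    rw [Matrix.mul_apply]
    rw [Finset.sum_eq_single j]
    · simp
    · intro t _ ht
      rw [Matrix.single_mul_apply_of_ne (c := (1:F)) j r t s ht b, mul_zero]
    · simp
  rw [h2] at h0
  exact (mul_ne_zero hij hrs) h0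

lemma anti_prime (hF : (2:F) ≠ 0) {a b : Matrix k k F}
    (h : ∀ w : Matrix k k F, a * w * b + b * w * a = 0) : a = 0 ∨ b = 0 := by
  have hswap : ∀ w : Matrix k k F, b * w * a = -(a * w * b) := by
    intro w; have := h w
    exact eq_neg_of_add_eq_zero_left (by rw [add_comm]; exact this)
  -- a x (a y b - b y a) = 0 for all x y
  have key : ∀ x y : Matrix k k F, a * x * (a * y * b - b * y * a) = 0 := by
    intro x y
    have e1 : a * (x * a * y) * b = -(b * (x * a * y) * a) := by
      have := hswap (x * a * y); rw [this, neg_neg]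
    have e2 : b * (x * a * y) * a = b * x * a * (y * a) := by noncomm_ring
    have e3 : b * x * a = -(a * x * b) := hswap x
    calc a * x * (a * y * b - b * y * a)
        = a * x * (a * y * b) - a * x * (b * y * a) := by noncomm_ring
      _ = a * (x * a * y) * b - (a * x * b) * (y * a) := by noncomm_ring
      _ = -(b * (x * a * y) * a) - (a * x * b) * (y * a) := by rw [e1]
      _ = -((b * x * a) * (y * a)) - (a * x * b) * (y * a) := by rw [e2]
      _ = -((-(a * x * b)) * (y * a)) - (a * x * b) * (y * a) := by rw [e3]
      _ = 0 := by noncomm_ring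
  rcases eq_or_ne a 0 with ha | ha
  · exact Or.inl ha
  · -- for each y : a = 0 or a*y*b = b*y*a
    right
    have hyb : ∀ y, a * y * b = 0 := by
      intro y
      rcases matrix_prime (fun x => key x y) with h' | h'
      · exact absurd h' ha
      · have h1 : a * y * b = b * y * a := sub_eq_zero.mp h'
        have h2 : a * y * b + a * y * b = 0 + 0 := by
          rw [add_zero]
          calc a * y * b + a * y * b = a * y * b + b * y * a := by rw [← h1]
            _ = 0 := h y
        have := half_cancel hF h2
        simpa using this
    rcases matrix_prime hyb with h' | h'
    · exact absurd h' ha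
    · exact h'

lemma halfsmul (hF : (2:F) ≠ 0) {M : Type*} [AddCommMonoid M] [Module F M] (X : M) :
    (2:F)⁻¹ • (X + X) = X := by
  rw [← two_smul F X, smul_smul, inv_mul_cancel₀ hF, one_smul]

lemma jordan_dichotomy (hF : (2:F) ≠ 0) (ψ : Matrix k k F ≃ₗ[F] Matrix k k F)
    (H : ∀ x y : Matrix k k F, ψ (x*y + y*x) = ψ x * ψ y + ψ y * ψ x) :
    (∀ x y : Matrix k k F, ψ (x * y) = ψ x * ψ y)
      ∨ (∀ x y : Matrix k k F, ψ (x * y) = ψ y * ψ x) := by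
  have hsq : ∀ x : Matrix k k F, ψ (x*x) = ψ x * ψ x := by
    intro x
    have h1 := H x x
    rw [map_add] at h1
    exact half_cancel hF h1
  have T : ∀ x y : Matrix k k F, ψ (x*y*x) = ψ x * ψ y * ψ x := by
    intro x y
    have h1 := H x (x*y + y*x)
    have e1 : x*(x*y+y*x) + (x*y+y*x)*x = ((x*x)*y + y*(x*x)) + (x*y*x + x*y*x) := by
      noncomm_ring
    rw [e1, map_add, H (x*x) y, hsq x, map_add, H x y] at h1
    apply half_cancel hF
    have e2 : (ψ x * ψ x * ψ y + ψ y * (ψ x * ψ x)) + (ψ x * ψ y * ψ x + ψ x * ψ y * ψ x)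
        = ψ x * (ψ x * ψ y + ψ y * ψ x) + (ψ x * ψ y + ψ y * ψ x) * ψ x := by noncomm_ring
    exact add_left_cancel (h1.trans e2.symm)
  have T2 : ∀ x y z : Matrix k k F,
      ψ (x*y*z + z*y*x) = ψ x * ψ y * ψ z + ψ z * ψ y * ψ x := by
    intro x y z
    have h1 := T (x+z) y
    rw [map_add] at h1
    have e1 : (x+z)*y*(x+z) = x*y*x + (x*y*z + z*y*x) + z*y*z := by noncomm_ring
    rw [e1, map_add, map_add, T x y, T z y] at h1
    have e2 : (ψ x + ψ z) * ψ y * (ψ x + ψ z)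
        = (ψ x * ψ y * ψ x + (ψ x * ψ y * ψ z + ψ z * ψ y * ψ x)) + ψ z * ψ y * ψ z := by
      noncomm_ring
    rw [e2] at h1
    exact add_left_cancel (add_right_cancel h1)
  have II : ∀ x y z : Matrix k k F,
      ψ (x*y) * ψ z * ψ (y*x) + ψ (y*x) * ψ z * ψ (x*y)
        = ψ x * (ψ y * ψ z * ψ y) * ψ x + ψ y * (ψ x * ψ z * ψ x) * ψ y := by
    intro x y z
    have h1 := T2 (x*y) z (y*x)
    have e1 : (x*y)*z*(y*x) + (y*x)*z*(x*y) = x*(y*z*y)*x + y*(x*z*x)*y := by noncomm_ring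
    rw [e1, map_add, T x (y*z*y), T y (x*z*x), T y z, T x z] at h1
    exact h1.symm
  have ptwise : ∀ x y : Matrix k k F,
      ψ (x*y) - ψ x * ψ y = 0 ∨ ψ (x*y) - ψ y * ψ x = 0 := by
    intro x y
    apply anti_prime hF
    intro w
    obtain ⟨z, rfl⟩ : ∃ z, ψ z = w := ⟨ψ.symm w, ψ.apply_symm_apply w⟩
    have hq : ψ (y*x) = ψ x * ψ y + ψ y * ψ x - ψ (x*y) := by
      have h2 := H x y
      rw [map_add] at h2
      exact eq_sub_of_add_eq' h2
    have II' := II x y z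
    rw [hq] at II'
    calc (ψ (x*y) - ψ x * ψ y) * ψ z * (ψ (x*y) - ψ y * ψ x)
          + (ψ (x*y) - ψ y * ψ x) * ψ z * (ψ (x*y) - ψ x * ψ y)
        = (ψ x * (ψ y * ψ z * ψ y) * ψ x + ψ y * (ψ x * ψ z * ψ x) * ψ y)
          - (ψ (x*y) * ψ z * (ψ x * ψ y + ψ y * ψ x - ψ (x*y))
             + (ψ x * ψ y + ψ y * ψ x - ψ (x*y)) * ψ z * ψ (x*y)) := by
          noncomm_ring
      _ = 0 := by rw [II']; exact sub_self _
  have sub1 : ∀ x : Matrix k k F,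
      (∀ y, ψ (x*y) - ψ x * ψ y = 0) ∨ (∀ y, ψ (x*y) - ψ y * ψ x = 0) := by
    intro x
    by_contra hc
    push_neg at hc
    obtain ⟨⟨y1, hy1⟩, ⟨y2, hy2⟩⟩ := hc
    have hB1 : ψ (x*y1) - ψ y1 * ψ x = 0 := (ptwise x y1).resolve_left hy1
    have hA2 : ψ (x*y2) - ψ x * ψ y2 = 0 := (ptwise x y2).resolve_right hy2
    rcases ptwise x (y1 + y2) with h' | h'
    · apply hy1
      have hsplit : ψ (x*(y1+y2)) - ψ x * ψ (y1+y2)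
          = (ψ (x*y1) - ψ x * ψ y1) + (ψ (x*y2) - ψ x * ψ y2) := by
        rw [mul_add, map_add, map_add]; noncomm_ring
      rw [hsplit, hA2, add_zero] at h'
      exact h'
    · apply hy2
      have hsplit : ψ (x*(y1+y2)) - ψ (y1+y2) * ψ x
          = (ψ (x*y1) - ψ y1 * ψ x) + (ψ (x*y2) - ψ y2 * ψ x) := by
        rw [mul_add, map_add, map_add]; noncomm_ring
      rw [hsplit, hB1, zero_add] at h'
      exact h'
  by_cases hglob : ∀ x y : Matrix k k F, ψ (x*y) - ψ x * ψ y = 0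
  · left; intro x y; have := hglob x y; rwa [sub_eq_zero] at this
  · right; intro x y
    push_neg at hglob
    obtain ⟨x0, y0, hx0⟩ := hglob
    have hBx0 : ∀ y, ψ (x0*y) - ψ y * ψ x0 = 0 := by
      rcases sub1 x0 with h' | h'
      · exact absurd (h' y0) hx0
      · exact h'
    have hBx : ∀ y', ψ (x*y') - ψ y' * ψ x = 0 := by
      by_contra hc
      push_neg at hc
      obtain ⟨y', hy'⟩ := hc
      have hAx : ∀ y, ψ (x*y) - ψ x * ψ y = 0 := (sub1 x).resolve_right (fun h' => hy' (h' y'))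
      rcases sub1 (x0 + x) with h'' | h''
      · apply hx0
        have e := h'' y0
        have hsplit : ψ ((x0+x)*y0) - ψ (x0+x) * ψ y0
            = (ψ (x0*y0) - ψ x0 * ψ y0) + (ψ (x*y0) - ψ x * ψ y0) := by
          rw [add_mul, map_add, map_add]; noncomm_ring
        rw [hsplit, hAx y0, add_zero] at e
        exact e
      · apply hy'
        have e := h'' y'
        have hsplit : ψ ((x0+x)*y') - ψ y' * ψ (x0+x)
            = (ψ (x0*y') - ψ y' * ψ x0) + (ψ (x*y') - ψ y' * ψ x) := by
          rw [add_mul, map_add, map_add]; noncomm_ring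
        rw [hsplit, hBx0 y', zero_add] at e
        exact e
    have := hBx y; rwa [sub_eq_zero] at this

lemma exists_conj [Nonempty k] (h : Matrix k k F →ₗ[F] Matrix k k F)
    (hinj : Function.Injective h)
    (hmul : ∀ x y : Matrix k k F, h (x*y) = h x * h y) :
    ∃ P P' : Matrix k k F, P * P' = 1 ∧ P' * P = 1 ∧ ∀ M, h M = P * M * P' := by
  classical
  obtain ⟨i0⟩ := ‹Nonempty k›
  set E : k → k → Matrix k k F := fun i j => Matrix.single i j 1 with hE
  have hf0 : h (E i0 i0) ≠ 0 := by
    intro h0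
    have h1 : E i0 i0 = 0 := hinj (by rw [h0, map_zero])
    have := congrFun (congrFun h1 i0) i0
    simp [hE] at this
  obtain ⟨r, c, hrc⟩ : ∃ r c, h (E i0 i0) r c ≠ 0 := by
    by_contra h'; push_neg at h'; exact hf0 (by ext i j; simp [h'])
  set f := h (E i0 i0) with hfdef
  have hff : f * f = f := by
    rw [hfdef, ← hmul]
    congr 1
    simp [hE]
  set v : k → F := fun r' => f r' c with hv
  have hfv : f.mulVec v = v := by
    ext r'
    show ∑ s, f r' s * f s c = f r' c
    rw [← Matrix.mul_apply, hff]
  have hvr : v r ≠ 0 := hrc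
  set u : k → F := fun s => if s = r then (f r c)⁻¹ else 0 with hu
  have huv : u ⬝ᵥ v = 1 := by
    simp only [dotProduct, hu]
    rw [Finset.sum_eq_single r]
    · simp only [if_pos rfl]; exact inv_mul_cancel₀ hvr
    · intro t _ ht; simp [ht]
    · simp
  set P : Matrix k k F := Matrix.of fun r' j => (h (E j i0)).mulVec v r' with hP
  set P' : Matrix k k F := Matrix.of fun i s => Matrix.vecMul u (h (E i0 i)) s with hP'
  have hP'P : P' * P = 1 := by
    ext a b
    have l1 : (P' * P) a b = (u ᵥ* h (E i0 a)) ⬝ᵥ ((h (E b i0)) *ᵥ v) := by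
      rw [Matrix.mul_apply, dotProduct]
      rfl
    rw [l1, ← dotProduct_mulVec, Matrix.mulVec_mulVec, ← hmul]
    rcases eq_or_ne a b with rfl | hab
    · have : E i0 a * E a i0 = E i0 i0 := by simp [hE]
      rw [this, ← hfdef, hfv, huv, Matrix.one_apply_eq]
    · have : E i0 a * E b i0 = 0 := by
        rw [hE]
        exact Matrix.single_mul_single_of_ne (c := 1) i0 a b hab 1
      rw [this, map_zero, Matrix.zero_mulVec, dotProduct_zero,
        Matrix.one_apply_ne hab]
  have hPP' : P * P' = 1 := mul_eq_one_comm.mp hP'P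
  have hME : ∀ (M : Matrix k k F) (b : k), M * E b i0 = ∑ s, M s b • E s i0 := by
    intro M b
    ext a a'
    rw [Matrix.mul_apply, Matrix.sum_apply]
    have lhs : ∑ j, M a j * E b i0 j a' = if i0 = a' then M a b else 0 := by
      rw [Finset.sum_eq_single b]
      · rcases eq_or_ne i0 a' with rfl | ha'
        · simp [hE]
        · simp [hE, ha']
      · intro t _ ht; simp [hE, Ne.symm ht]
      · simp
    have rhs : ∑ s, (M s b • E s i0) a a' = if i0 = a' then M a b else 0 := by
      rw [Finset.sum_eq_single a]
      · rcases eq_or_ne i0 a' with rfl | ha'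
        · simp [hE]
        · simp [hE, ha']
      · intro t _ ht; simp [hE, ht]
      · simp
    rw [lhs, rhs]
  have hcomm : ∀ M : Matrix k k F, h M * P = P * M := by
    intro M
    ext a b
    have l1 : (h M * P) a b = ((h (M * E b i0)).mulVec v) a := by
      rw [hmul, ← Matrix.mulVec_mulVec]
      rw [Matrix.mul_apply]
      simp only [hP, Matrix.of_apply, Matrix.mulVec, dotProduct]
    have l2 : (P * M) a b = ((h (M * E b i0)).mulVec v) a := by
      have hsum : h (M * E b i0) = ∑ s, M s b • h (E s i0) := by
        rw [hME M b, map_sum]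
        simp
      rw [Matrix.mul_apply, hsum]
      simp only [Matrix.mulVec, dotProduct, Matrix.sum_apply, Matrix.smul_apply,
        smul_eq_mul, Finset.sum_mul, Finset.mul_sum]
      rw [Finset.sum_comm]
      refine Finset.sum_congr rfl fun s _ => ?_
      simp only [hP, Matrix.of_apply, Matrix.mulVec, dotProduct, Finset.sum_mul]
      refine Finset.sum_congr rfl fun t _ => ?_
      ring
    rw [l1, l2]
  refine ⟨P, P', hPP', hP'P, ?_⟩
  intro M
  calc h M = h M * (P * P') := by rw [hPP', mul_one]
    _ = (h M * P) * P' := by rw [Matrix.mul_assoc]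
    _ = P * M * P' := by rw [hcomm M]

end Stmt0Aux

set_option maxHeartbeats 1000000 in
open Stmt0Aux in
/-- Every Jordan-algebra automorphism of the subalgebra of
`H(F_{2m})` of matrices `[[A,B],[-B,A]]` (`A` symmetric, `B` skew-symmetric)
is induced by an automorphism of `H(F_{2m})`, i.e. is conjugation
`X ↦ Q⁻¹ X Q` by an orthogonal matrix `Q`. -/
theorem statement0 {F : Type*} [Field F] [IsAlgClosed F] (hF : (2 : F) ≠ 0)
    (m : ℕ) (hm : 0 < m)
    (φ : (circSub m F) ≃ₗ[F] (circSub m F))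
    (hφ : ∀ x y z : circSub m F,
      jmul (x : Matrix (Fin m ⊕ Fin m) (Fin m ⊕ Fin m) F)
          (y : Matrix (Fin m ⊕ Fin m) (Fin m ⊕ Fin m) F)
        = (z : Matrix (Fin m ⊕ Fin m) (Fin m ⊕ Fin m) F) →
      jmul ((φ x : circSub m F) : Matrix (Fin m ⊕ Fin m) (Fin m ⊕ Fin m) F)
          ((φ y : circSub m F) : Matrix (Fin m ⊕ Fin m) (Fin m ⊕ Fin m) F)
        = ((φ z : circSub m F) : Matrix (Fin m ⊕ Fin m) (Fin m ⊕ Fin m) F)) :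
    ∃ Q : Matrix (Fin m ⊕ Fin m) (Fin m ⊕ Fin m) F, Qᵀ * Q = 1 ∧
      ∀ x : circSub m F,
        ((φ x : circSub m F) : Matrix (Fin m ⊕ Fin m) (Fin m ⊕ Fin m) F)
          = Q⁻¹ * (x : Matrix (Fin m ⊕ Fin m) (Fin m ⊕ Fin m) F) * Q := by
  classical
  have hNE : Nonempty (Fin m) := ⟨⟨0, hm⟩⟩
  obtain ⟨ii, hii⟩ : ∃ z : F, z * z = -1 := by
    obtain ⟨z, hz⟩ := IsAlgClosed.exists_pow_nat_eq (-1 : F) (n := 2) two_pos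
    exact ⟨z, by rw [← hz, sq]⟩
  set U : Matrix (Fin m ⊕ Fin m) (Fin m ⊕ Fin m) F :=
    Matrix.fromBlocks 1 1 (ii • 1) (-(ii • 1)) with hU
  set V : Matrix (Fin m ⊕ Fin m) (Fin m ⊕ Fin m) F :=
    (2:F)⁻¹ • Matrix.fromBlocks 1 (-(ii • 1)) 1 (ii • 1) with hV
  set Sig : Matrix (Fin m ⊕ Fin m) (Fin m ⊕ Fin m) F :=
    Matrix.fromBlocks 0 1 1 0 with hSig
  have blocksimp : True := trivial
  have hUV : U * V = 1 := by
    have h0 : U * V = Matrix.fromBlocks 1 0 0 1 := by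
      rw [hU, hV, Matrix.mul_smul, Matrix.fromBlocks_multiply, Matrix.fromBlocks_smul]
      refine Matrix.fromBlocks_inj.mpr ⟨?_, ?_, ?_, ?_⟩ <;>
        simp only [Matrix.one_mul, Matrix.mul_one, Matrix.zero_mul, Matrix.mul_zero,
          Matrix.smul_mul, Matrix.mul_smul, Matrix.neg_mul, Matrix.mul_neg,
          smul_smul, hii, neg_neg, smul_neg, neg_smul, neg_one_smul, one_smul,
          add_zero, zero_add] <;>
        first | rfl | exact halfsmul hF _ | module | simp
    rw [h0, Matrix.fromBlocks_one]
  have hVU : V * U = 1 := by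
    have h0 : V * U = Matrix.fromBlocks 1 0 0 1 := by
      rw [hU, hV, Matrix.smul_mul, Matrix.fromBlocks_multiply, Matrix.fromBlocks_smul]
      refine Matrix.fromBlocks_inj.mpr ⟨?_, ?_, ?_, ?_⟩ <;>
        simp only [Matrix.one_mul, Matrix.mul_one, Matrix.zero_mul, Matrix.mul_zero,
          Matrix.smul_mul, Matrix.mul_smul, Matrix.neg_mul, Matrix.mul_neg,
          smul_smul, hii, neg_neg, smul_neg, neg_smul, neg_one_smul, one_smul,
          add_zero, zero_add] <;>
        first | rfl | exact halfsmul hF _ | module | simp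
    rw [h0, Matrix.fromBlocks_one]
  have hUtU : Uᵀ * U = (2:F) • Sig := by
    rw [hU, hSig, Matrix.fromBlocks_transpose, Matrix.fromBlocks_multiply,
      Matrix.fromBlocks_smul]
    refine Matrix.fromBlocks_inj.mpr ⟨?_, ?_, ?_, ?_⟩ <;>
      simp only [Matrix.transpose_one, Matrix.transpose_smul, Matrix.transpose_neg,
        Matrix.one_mul, Matrix.mul_one, Matrix.zero_mul, Matrix.mul_zero,
        Matrix.smul_mul, Matrix.mul_smul, Matrix.neg_mul, Matrix.mul_neg,
        smul_smul, hii, neg_neg, smul_neg, neg_smul, neg_one_smul, one_smul,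
        add_zero, zero_add, smul_zero] <;>
      first | rfl | module | simp
  have hblocks : ∀ M N : Matrix (Fin m) (Fin m) F,
      U * Matrix.fromBlocks M 0 0 N * V
        = Matrix.fromBlocks ((2:F)⁻¹ • (M + N)) ((2:F)⁻¹ • (ii•N - ii•M))
            (-((2:F)⁻¹ • (ii•N - ii•M))) ((2:F)⁻¹ • (M + N)) := by
    intro M N
    rw [hU, hV, Matrix.mul_smul, Matrix.fromBlocks_multiply, Matrix.fromBlocks_multiply,
      Matrix.fromBlocks_smul]
    refine Matrix.fromBlocks_inj.mpr ⟨?_, ?_, ?_, ?_⟩ <;>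
      simp only [Matrix.one_mul, Matrix.mul_one, Matrix.zero_mul, Matrix.mul_zero,
        Matrix.smul_mul, Matrix.mul_smul, Matrix.neg_mul, Matrix.mul_neg,
        smul_smul, hii, neg_neg, smul_neg, neg_smul, neg_one_smul, one_smul,
        add_zero, zero_add] <;>
      first | rfl | module | simp
  clear_value U V Sig
  -- the embedding Θ of M_m(F) into the 2m x 2m matrices, with image circSub
  set Th : Matrix (Fin m) (Fin m) F → Matrix (Fin m ⊕ Fin m) (Fin m ⊕ Fin m) F :=
    fun M => U * Matrix.fromBlocks M 0 0 Mᵀ * V with hTh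
  have hsandwich : ∀ X Y : Matrix (Fin m ⊕ Fin m) (Fin m ⊕ Fin m) F,
      (U * X * V) * (U * Y * V) = U * (X * Y) * V := by
    intro X Y
    have h1 : V * (U * (Y * V)) = Y * V := by
      rw [← Matrix.mul_assoc, hVU, Matrix.one_mul]
    calc (U * X * V) * (U * Y * V) = U * (X * (V * (U * (Y * V)))) := by
          simp only [Matrix.mul_assoc]
      _ = U * (X * (Y * V)) := by rw [h1]
      _ = U * (X * Y) * V := by simp only [Matrix.mul_assoc]
  have hdiagmul : ∀ M N Mh Nh : Matrix (Fin m) (Fin m) F,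
      Matrix.fromBlocks M 0 0 Mh * Matrix.fromBlocks N 0 0 Nh
        = Matrix.fromBlocks (M * N) 0 0 (Mh * Nh) := by
    intro M N Mh Nh
    rw [Matrix.fromBlocks_multiply]
    simp
  have hThmul : ∀ M N : Matrix (Fin m) (Fin m) F,
      jmul (Th M) (Th N) = Th (jmul M N) := by
    intro M N
    simp only [hTh]
    rw [jmul, jmul, hsandwich, hsandwich, hdiagmul, hdiagmul]
    have e1 : U * Matrix.fromBlocks (M * N) 0 0 (Mᵀ * Nᵀ) * V
          + U * Matrix.fromBlocks (N * M) 0 0 (Nᵀ * Mᵀ) * V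
        = U * Matrix.fromBlocks (M * N + N * M) 0 0 ((M * N + N * M)ᵀ) * V := by
      rw [Matrix.transpose_add, Matrix.transpose_mul, Matrix.transpose_mul]
      rw [show Matrix.fromBlocks (M * N + N * M) 0 0 (Nᵀ * Mᵀ + Mᵀ * Nᵀ)
          = Matrix.fromBlocks (M * N) 0 0 (Mᵀ * Nᵀ) + Matrix.fromBlocks (N * M) 0 0 (Nᵀ * Mᵀ) by
        rw [Matrix.fromBlocks_add]
        exact Matrix.fromBlocks_inj.mpr ⟨rfl, (add_zero _).symm, (add_zero _).symm, by abel⟩]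
      rw [Matrix.mul_add, Matrix.add_mul]
    rw [e1]
    have e3 : Matrix.fromBlocks ((2:F)⁻¹ • (M * N + N * M)) 0 0
          (((2:F)⁻¹ • (M * N + N * M))ᵀ)
        = (2:F)⁻¹ • Matrix.fromBlocks (M * N + N * M) 0 0 ((M * N + N * M)ᵀ) := by
      rw [Matrix.transpose_smul, Matrix.fromBlocks_smul]
      exact Matrix.fromBlocks_inj.mpr ⟨rfl, (smul_zero _).symm, (smul_zero _).symm, rfl⟩
    rw [e3, Matrix.mul_smul, Matrix.smul_mul]

  have hThmem : ∀ M : Matrix (Fin m) (Fin m) F, Th M ∈ circSub m F := by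
    intro M
    simp only [hTh]
    rw [hblocks]
    refine ⟨(2:F)⁻¹ • (M + Mᵀ), (2:F)⁻¹ • (ii • Mᵀ - ii • M), ?_, ?_, rfl⟩
    · rw [Matrix.transpose_smul, Matrix.transpose_add, Matrix.transpose_transpose]
      congr 1
      abel
    · rw [Matrix.transpose_smul, Matrix.transpose_sub, Matrix.transpose_smul,
        Matrix.transpose_smul, Matrix.transpose_transpose, ← smul_neg]
      congr 1
      abel
  have hThinj : Function.Injective Th := by
    intro M N hMN
    simp only [hTh] at hMN
    have h2 : ∀ D : Matrix (Fin m ⊕ Fin m) (Fin m ⊕ Fin m) F,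
        V * (U * D * V) * U = D := by
      intro D
      calc V * (U * D * V) * U = (V * U) * (D * (V * U)) := by
            simp only [Matrix.mul_assoc]
        _ = D := by rw [hVU, Matrix.one_mul, Matrix.mul_one]
    have h1 : Matrix.fromBlocks M 0 0 Mᵀ = Matrix.fromBlocks N 0 0 Nᵀ := by
      rw [← h2 (Matrix.fromBlocks M 0 0 Mᵀ), hMN, h2]
    have := congrArg Matrix.toBlocks₁₁ h1
    rwa [Matrix.toBlocks_fromBlocks₁₁, Matrix.toBlocks_fromBlocks₁₁] at this
  have hThsurj : ∀ x : circSub m F, ∃ M, Th M = (x : Matrix (Fin m ⊕ Fin m) (Fin m ⊕ Fin m) F) := by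
    rintro ⟨x, A0, B0, hA0, hB0, rfl⟩
    refine ⟨A0 + ii • B0, ?_⟩
    simp only [hTh]
    rw [hblocks]
    have htr : (A0 + ii • B0)ᵀ = A0 - ii • B0 := by
      rw [Matrix.transpose_add, Matrix.transpose_smul, hA0, hB0, smul_neg]
      abel
    rw [htr]
    have e1 : (2:F)⁻¹ • (A0 + ii • B0 + (A0 - ii • B0)) = A0 := by
      rw [show A0 + ii • B0 + (A0 - ii • B0) = A0 + A0 by abel]
      exact halfsmul hF A0
    have e2 : (2:F)⁻¹ • (ii • (A0 - ii • B0) - ii • (A0 + ii • B0)) = B0 := by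
      rw [show ii • (A0 - ii • B0) - ii • (A0 + ii • B0)
          = -((ii * ii) • B0) + -((ii * ii) • B0) by
        rw [smul_sub, smul_add, smul_smul]; abel]
      rw [hii]
      rw [show -((-1:F) • B0) + -((-1:F) • B0) = B0 + B0 by simp]
      exact halfsmul hF B0
    rw [e1, e2]
  -- package Θ as a linear equivalence onto circSub
  have hThlin_add : ∀ M N, Th (M + N) = Th M + Th N := by
    intro M N
    simp only [hTh]
    rw [Matrix.transpose_add]
    rw [show Matrix.fromBlocks (M + N) 0 0 (Mᵀ + Nᵀ)
        = Matrix.fromBlocks M 0 0 Mᵀ + Matrix.fromBlocks N 0 0 Nᵀ by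
      rw [Matrix.fromBlocks_add]
      exact Matrix.fromBlocks_inj.mpr ⟨rfl, (add_zero _).symm, (add_zero _).symm, rfl⟩]
    rw [Matrix.mul_add, Matrix.add_mul]
  have hThlin_smul : ∀ (c : F) M, Th (c • M) = c • Th M := by
    intro c M
    simp only [hTh]
    rw [Matrix.transpose_smul]
    rw [show Matrix.fromBlocks (c • M) 0 0 (c • Mᵀ)
        = c • Matrix.fromBlocks M 0 0 Mᵀ by
      rw [Matrix.fromBlocks_smul]
      exact Matrix.fromBlocks_inj.mpr ⟨rfl, (smul_zero _).symm, (smul_zero _).symm, rfl⟩]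
    rw [Matrix.mul_smul, Matrix.smul_mul]
  let ThL : Matrix (Fin m) (Fin m) F →ₗ[F] Matrix (Fin m ⊕ Fin m) (Fin m ⊕ Fin m) F :=
    { toFun := Th
      map_add' := hThlin_add
      map_smul' := by intro c x; simp only [RingHom.id_apply]; exact hThlin_smul c x }
  have hThL : ∀ M, ThL M = Th M := fun M => rfl
  let ThR : Matrix (Fin m) (Fin m) F →ₗ[F] circSub m F :=
    ThL.codRestrict (circSub m F) hThmem
  have hThR_bij : Function.Bijective ThR := by
    constructor
    · intro M N h
      apply hThinj
      exact congrArg Subtype.val h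
    · intro x
      obtain ⟨M, hM⟩ := hThsurj x
      exact ⟨M, Subtype.ext hM⟩
  let θ : Matrix (Fin m) (Fin m) F ≃ₗ[F] circSub m F :=
    LinearEquiv.ofBijective ThR hThR_bij
  have hθcoe : ∀ M, ((θ M : circSub m F) : Matrix (Fin m ⊕ Fin m) (Fin m ⊕ Fin m) F) = Th M :=
    fun M => rfl
  let ψ : Matrix (Fin m) (Fin m) F ≃ₗ[F] Matrix (Fin m) (Fin m) F :=
    θ.trans (φ.trans θ.symm)
  have hψθ : ∀ M, ((φ (θ M) : circSub m F) : Matrix (Fin m ⊕ Fin m) (Fin m ⊕ Fin m) F)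
      = Th (ψ M) := by
    intro M
    have h0 : θ (ψ M) = φ (θ M) := by
      simp only [ψ, LinearEquiv.trans_apply, LinearEquiv.apply_symm_apply]
    rw [← h0, hθcoe]
  have hψj : ∀ M N, ψ (jmul M N) = jmul (ψ M) (ψ N) := by
    intro M N
    apply hThinj
    have h0 := hφ (θ M) (θ N) (θ (jmul M N)) (by rw [hθcoe, hθcoe, hθcoe, hThmul])
    rw [hψθ, hψθ, hψθ, hThmul] at h0
    exact h0.symm
  have Hψ : ∀ x y : Matrix (Fin m) (Fin m) F,
      ψ (x*y + y*x) = ψ x * ψ y + ψ y * ψ x := by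
    intro x y
    have h0 := hψj x y
    rw [jmul, jmul, _root_.map_smul] at h0
    have h1 := congrArg (fun X : Matrix (Fin m) (Fin m) F => (2:F) • X) h0
    simp only [smul_smul, mul_inv_cancel₀ hF, one_smul] at h1
    exact h1
  have key : ∃ W W' : Matrix (Fin m ⊕ Fin m) (Fin m ⊕ Fin m) F,
      W * W' = 1 ∧ W' * W = 1 ∧ Wᵀ * Sig * W = Sig ∧
      ∀ M : Matrix (Fin m) (Fin m) F,
        W' * Matrix.fromBlocks M 0 0 Mᵀ * W = Matrix.fromBlocks (ψ M) 0 0 ((ψ M)ᵀ) := by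
    rcases jordan_dichotomy hF ψ Hψ with hhom | hanti
    · obtain ⟨P, P', hPP', hP'P, hform⟩ :=
        exists_conj (ψ : Matrix (Fin m) (Fin m) F →ₗ[F] Matrix (Fin m) (Fin m) F)
          (by simpa using ψ.injective) (by simpa using hhom)
      have hψform : ∀ M, ψ M = P * M * P' := by intro M; simpa using hform M
      refine ⟨Matrix.fromBlocks P' 0 0 Pᵀ, Matrix.fromBlocks P 0 0 P'ᵀ, ?_, ?_, ?_, ?_⟩
      · rw [Matrix.fromBlocks_multiply]
        simp only [Matrix.mul_zero, Matrix.zero_mul, add_zero, zero_add]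
        rw [hP'P, ← Matrix.transpose_mul, hP'P, Matrix.transpose_one, Matrix.fromBlocks_one]
      · rw [Matrix.fromBlocks_multiply]
        simp only [Matrix.mul_zero, Matrix.zero_mul, add_zero, zero_add]
        rw [hPP', ← Matrix.transpose_mul, hPP', Matrix.transpose_one, Matrix.fromBlocks_one]
      · rw [hSig, Matrix.fromBlocks_transpose, Matrix.transpose_transpose,
          Matrix.transpose_zero, Matrix.fromBlocks_multiply, Matrix.fromBlocks_multiply]
        simp only [Matrix.mul_zero, Matrix.zero_mul, add_zero, zero_add,
          Matrix.mul_one, Matrix.one_mul]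
        refine Matrix.fromBlocks_inj.mpr ⟨rfl, ?_, ?_, rfl⟩
        · rw [← Matrix.transpose_mul, hPP', Matrix.transpose_one]
        · rw [hPP']
      · intro M
        rw [Matrix.fromBlocks_multiply, Matrix.fromBlocks_multiply]
        simp only [Matrix.mul_zero, Matrix.zero_mul, add_zero, zero_add]
        refine Matrix.fromBlocks_inj.mpr ⟨?_, rfl, rfl, ?_⟩
        · rw [hψform M]
        · rw [hψform M, Matrix.transpose_mul, Matrix.transpose_mul, Matrix.mul_assoc]
    · let g : Matrix (Fin m) (Fin m) F →ₗ[F] Matrix (Fin m) (Fin m) F :=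
        { toFun := fun M => (ψ M)ᵀ
          map_add' := by
            intro a b
            show (ψ (a + b))ᵀ = (ψ a)ᵀ + (ψ b)ᵀ
            rw [map_add, Matrix.transpose_add]
          map_smul' := by
            intro c a
            show (ψ (c • a))ᵀ = (RingHom.id F) c • (ψ a)ᵀ
            rw [show ψ (c • a) = c • ψ a from _root_.map_smul ψ c a,
              Matrix.transpose_smul, RingHom.id_apply]
        }
      have hg : ∀ M, g M = (ψ M)ᵀ := fun M => rfl
      have hginj : Function.Injective g := by
        intro a b hab
        apply ψ.injective
        have h0 := congrArg Matrix.transpose hab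
        simpa [hg] using h0
      have hgmul : ∀ x y, g (x*y) = g x * g y := by
        intro x y
        rw [hg, hg, hg, hanti x y, Matrix.transpose_mul]
      obtain ⟨P, P', hPP', hP'P, hform⟩ := exists_conj g hginj hgmul
      have hψform : ∀ M, ψ M = P'ᵀ * Mᵀ * Pᵀ := by
        intro M
        have h0 := congrArg Matrix.transpose (hform M)
        rw [hg, Matrix.transpose_transpose, Matrix.transpose_mul,
          Matrix.transpose_mul] at h0
        rw [h0, Matrix.mul_assoc]
      have hψformT : ∀ M, (ψ M)ᵀ = P * M * P' := by
        intro M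
        have h0 := hform M
        rw [hg] at h0
        exact h0
      refine ⟨Matrix.fromBlocks 0 P' Pᵀ 0, Matrix.fromBlocks 0 P'ᵀ P 0, ?_, ?_, ?_, ?_⟩
      · rw [Matrix.fromBlocks_multiply]
        simp only [Matrix.mul_zero, Matrix.zero_mul, add_zero, zero_add]
        rw [hP'P, ← Matrix.transpose_mul, hP'P, Matrix.transpose_one, Matrix.fromBlocks_one]
      · rw [Matrix.fromBlocks_multiply]
        simp only [Matrix.mul_zero, Matrix.zero_mul, add_zero, zero_add]
        rw [hPP', ← Matrix.transpose_mul, hPP', Matrix.transpose_one, Matrix.fromBlocks_one]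
      · rw [hSig, Matrix.fromBlocks_transpose, Matrix.transpose_transpose,
          Matrix.transpose_zero, Matrix.fromBlocks_multiply, Matrix.fromBlocks_multiply]
        simp only [Matrix.mul_zero, Matrix.zero_mul, add_zero, zero_add,
          Matrix.mul_one, Matrix.one_mul]
        refine Matrix.fromBlocks_inj.mpr ⟨rfl, ?_, ?_, rfl⟩
        · rw [hPP']
        · rw [← Matrix.transpose_mul, hPP', Matrix.transpose_one]
      · intro M
        rw [Matrix.fromBlocks_multiply, Matrix.fromBlocks_multiply]
        simp only [Matrix.mul_zero, Matrix.zero_mul, add_zero, zero_add]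
        refine Matrix.fromBlocks_inj.mpr ⟨?_, rfl, rfl, ?_⟩
        · rw [hψform M]
        · rw [hψformT M]
  obtain ⟨W, W', hWW', hW'W, hWsym, hWD⟩ := key
  set Q := U * W * V with hQ
  set Qi := U * W' * V with hQi
  clear_value Q Qi
  have hQQi : Q * Qi = 1 := by
    rw [hQ, hQi, hsandwich, hWW', Matrix.mul_one, hUV]
  have hQinv : Q⁻¹ = Qi := Matrix.inv_eq_right_inv hQQi
  have hQtQ : Qᵀ * Q = 1 := by
    rw [hQ, Matrix.transpose_mul]
    calc Vᵀ * ((U * W)ᵀ) * (U * W * V) = Vᵀ * (Wᵀ * Uᵀ) * (U * W * V) := by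
          rw [Matrix.transpose_mul]
      _ = Vᵀ * (Wᵀ * ((Uᵀ * U) * (W * V))) := by simp only [Matrix.mul_assoc]
      _ = Vᵀ * (Wᵀ * (((2:F) • Sig) * (W * V))) := by rw [hUtU]
      _ = (2:F) • (Vᵀ * ((Wᵀ * Sig * W) * V)) := by
          rw [Matrix.smul_mul, Matrix.mul_smul, Matrix.mul_smul]
          simp only [Matrix.mul_assoc]
      _ = (2:F) • (Vᵀ * (Sig * V)) := by rw [hWsym]
      _ = (2:F) • (Vᵀ * (((2:F)⁻¹ • (Uᵀ * U)) * V)) := by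
          rw [show Sig = (2:F)⁻¹ • (Uᵀ * U) from by
            rw [hUtU, smul_smul, inv_mul_cancel₀ hF, one_smul]]
      _ = (2:F) • ((2:F)⁻¹ • (Vᵀ * (Uᵀ * (U * V)))) := by
          rw [Matrix.smul_mul, Matrix.mul_smul]
          simp only [Matrix.mul_assoc]
      _ = Vᵀ * (Uᵀ * (U * V)) := by rw [smul_smul, mul_inv_cancel₀ hF, one_smul]
      _ = 1 := by
          rw [hUV, Matrix.mul_one, ← Matrix.transpose_mul, hUV, Matrix.transpose_one]
  refine ⟨Q, hQtQ, ?_⟩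
  intro x
  obtain ⟨M, hM⟩ := hThsurj x
  have hxθ : θ M = x := Subtype.ext (by rw [hθcoe]; exact hM)
  have hφx : ((φ x : circSub m F) : Matrix (Fin m ⊕ Fin m) (Fin m ⊕ Fin m) F)
      = Th (ψ M) := by
    rw [← hxθ]
    exact hψθ M
  rw [hφx, hQinv, ← hM, hQi, hQ]
  simp only [hTh]
  rw [hsandwich, hsandwich, hWD]
end

section
/- Let J be a Jordan subalgebra of H(F_{2n},j) that is isomorphic as a Jordan algebra to F_n^(+). Then there is an automorphism of H(F_{2n},j) (conjugation by a symplectic matrix) mapping J onto the subalgebra of all block-diagonal matrices diag(X, X^t) with X an arbitrary n×n matrix over F. -/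
open Matrix

namespace St3
variable {F : Type*} [Field F] {n : ℕ}

lemma half {M : Type*} [AddCommGroup M] [Module F M] (hF : (2:F) ≠ 0)
    {x y : M} (h : x + x = y + y) : x = y := by
  have h2 : (2:F) • x = (2:F) • y := by rw [two_smul, two_smul]; exact h
  exact smul_right_injective M hF h2

lemma orth_of (hF : (2:F) ≠ 0) {p q : Matrix (Fin n ⊕ Fin n) (Fin n ⊕ Fin n) F}
    (hp : p * p = p) (h : p * q + q * p = 0) : p * q = 0 ∧ q * p = 0 := by
  have h1 : p * q + p * (q * p) = 0 := by
    have := congrArg (p * ·) h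
    simpa [mul_add, ← mul_assoc, hp] using this
  have h2 : p * (q * p) + q * p = 0 := by
    have := congrArg (· * p) h
    simpa [add_mul, mul_assoc, hp] using this
  have hqp : p * q = q * p := by
    have h3 := h1.trans h2.symm
    have := congrArg (· - p * (q * p)) h3
    simpa [add_sub_cancel_right] using this
  have : p * q + p * q = 0 + 0 := by
    rw [add_zero]; rw [hqp] at h ⊢; exact h
  have hz := half hF this
  exact ⟨hz, hqp ▸ hz⟩

lemma mulVec_ext {M N : Matrix (Fin n ⊕ Fin n) (Fin n ⊕ Fin n) F}
    (h : ∀ v, M *ᵥ v = N *ᵥ v) : M = N := by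
  ext i j
  have := congrFun (h (Pi.single j 1)) i
  simpa [Matrix.mulVec_single] using this

lemma S_transpose : (sympMat n F)ᵀ = -(sympMat n F) := by
  simp [sympMat, Matrix.fromBlocks_transpose, Matrix.fromBlocks_neg]

lemma S_mul_S : sympMat n F * sympMat n F = (-1 : Matrix _ _ F) := by
  have h1 : (-1 : Matrix (Fin n ⊕ Fin n) (Fin n ⊕ Fin n) F)
      = fromBlocks (-1) (-0) (-0) (-1) := by
    rw [← Matrix.fromBlocks_neg, Matrix.fromBlocks_one]
  rw [h1]
  simp [sympMat, Matrix.fromBlocks_multiply]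

def mstar (M : Matrix (Fin n ⊕ Fin n) (Fin n ⊕ Fin n) F) :
    Matrix (Fin n ⊕ Fin n) (Fin n ⊕ Fin n) F :=
  -(sympMat n F * Mᵀ * sympMat n F)

lemma S_mul_mstar (M : Matrix (Fin n ⊕ Fin n) (Fin n ⊕ Fin n) F) :
    sympMat n F * mstar M = Mᵀ * sympMat n F := by
  have h : sympMat n F * -(sympMat n F * Mᵀ * sympMat n F)
      = -((sympMat n F * sympMat n F) * (Mᵀ * sympMat n F)) := by
    noncomm_ring
  rw [mstar, h, S_mul_S]
  simp

lemma mstar_of_sa {M : Matrix (Fin n ⊕ Fin n) (Fin n ⊕ Fin n) F}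
    (h : Mᵀ * sympMat n F = sympMat n F * M) : mstar M = M := by
  have h2 : mstar M = -((sympMat n F) * (Mᵀ * sympMat n F)) := by rw [mstar]; noncomm_ring
  rw [h2, h, ← mul_assoc, S_mul_S]
  simp

lemma mstar_mul (M N : Matrix (Fin n ⊕ Fin n) (Fin n ⊕ Fin n) F) :
    mstar (M * N) = mstar N * mstar M := by
  unfold mstar
  have h : (sympMat n F * Nᵀ * sympMat n F) * (sympMat n F * Mᵀ * sympMat n F)
      = sympMat n F * Nᵀ * (sympMat n F * sympMat n F) * Mᵀ * sympMat n F := by noncomm_ring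
  rw [neg_mul_neg, h, S_mul_S, Matrix.transpose_mul]
  noncomm_ring

lemma mstar_zero : mstar (0 : Matrix (Fin n ⊕ Fin n) (Fin n ⊕ Fin n) F) = 0 := by
  simp [mstar]

def om (u v : Fin n ⊕ Fin n → F) : F := u ⬝ᵥ (sympMat n F *ᵥ v)

lemma om_skew (u v : Fin n ⊕ Fin n → F) : om u v = -om v u := by
  unfold om
  rw [Matrix.dotProduct_mulVec]
  have h1 : u ᵥ* sympMat n F = -(sympMat n F *ᵥ u) := by
    have h2 : u ᵥ* sympMat n F = (sympMat n F)ᵀ *ᵥ u := by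
      rw [← Matrix.vecMul_transpose, Matrix.transpose_transpose]
    rw [h2, S_transpose, Matrix.neg_mulVec]
  rw [h1, neg_dotProduct, dotProduct_comm]

lemma om_self (hF : (2:F) ≠ 0) (u : Fin n ⊕ Fin n → F) : om u u = 0 := by
  have h := om_skew u u
  have h2 : om u u + om u u = 0 + 0 := by
    rw [add_zero]; nth_rewrite 2 [h]; exact add_neg_cancel _
  exact half hF h2

lemma om_mulVec_left (M : Matrix (Fin n ⊕ Fin n) (Fin n ⊕ Fin n) F) (u v : Fin n ⊕ Fin n → F) :
    om (M *ᵥ u) v = om u (mstar M *ᵥ v) := by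
  unfold om
  rw [Matrix.mulVec_mulVec, S_mul_mstar, Matrix.dotProduct_mulVec, Matrix.dotProduct_mulVec]
  rw [← Matrix.vecMul_vecMul]
  congr 1
  exact congrArg (· ᵥ* sympMat n F) (Matrix.vecMul_transpose M u).symm

lemma om_nondeg {u : Fin n ⊕ Fin n → F} (h : ∀ v, om u v = 0) : u = 0 := by
  have hS : u ᵥ* sympMat n F = 0 := by
    ext j
    have h2 := h (Pi.single j 1)
    unfold om at h2
    rw [Matrix.dotProduct_mulVec] at h2
    simpa [dotProduct_single] using h2
  have h3 := congrArg (· ᵥ* sympMat n F) hS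
  simp only [Matrix.vecMul_vecMul, S_mul_S, Matrix.zero_vecMul] at h3
  rw [Matrix.vecMul_neg, Matrix.vecMul_one, neg_eq_zero] at h3
  exact h3

lemma S_cancel {X Y : Matrix (Fin n ⊕ Fin n) (Fin n ⊕ Fin n) F}
    (h : sympMat n F * X = sympMat n F * Y) : X = Y := by
  have h2 := congrArg (sympMat n F * ·) h
  simp only [← mul_assoc, S_mul_S] at h2
  rwa [neg_mul, neg_mul, one_mul, one_mul, neg_inj] at h2

lemma mstar_mstar (M : Matrix (Fin n ⊕ Fin n) (Fin n ⊕ Fin n) F) :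
    mstar (mstar M) = M := by
  apply S_cancel (X := mstar (mstar M)) (Y := M)
  rw [S_mul_mstar]
  have ht : (mstar M)ᵀ = -(sympMat n F * (M * sympMat n F)) := by
    unfold mstar
    rw [Matrix.transpose_neg, Matrix.transpose_mul, Matrix.transpose_mul,
      Matrix.transpose_transpose, S_transpose]
    noncomm_ring
  rw [ht]
  have : -(sympMat n F * (M * sympMat n F)) * sympMat n F
      = -(sympMat n F * M * (sympMat n F * sympMat n F)) := by noncomm_ring
  rw [this, S_mul_S]
  simp

lemma om_mulVec_right (M : Matrix (Fin n ⊕ Fin n) (Fin n ⊕ Fin n) F)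
    (u v : Fin n ⊕ Fin n → F) :
    om u (M *ᵥ v) = om (mstar M *ᵥ u) v := by
  rw [om_mulVec_left, mstar_mstar]

lemma om_add_right (u x y : Fin n ⊕ Fin n → F) : om u (x + y) = om u x + om u y := by
  unfold om
  rw [Matrix.mulVec_add, dotProduct_add]

lemma om_zero_right (u : Fin n ⊕ Fin n → F) : om u 0 = 0 := by
  unfold om
  rw [Matrix.mulVec_zero, dotProduct_zero]

lemma om_zero_left (u : Fin n ⊕ Fin n → F) : om 0 u = 0 := by
  unfold om
  rw [zero_dotProduct]

/-- abbreviation for our matrix space -/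
abbrev MK (F : Type*) [Field F] (n : ℕ) := Matrix (Fin n ⊕ Fin n) (Fin n ⊕ Fin n) F

/-- A system of matrices behaving like the images of matrix units under a
Jordan homomorphism, selfadjoint for the symplectic involution. -/
structure JSys (F : Type*) [Field F] (n : ℕ) : Type _ where
  w : Fin n → Fin n → MK F n
  hF : (2:F) ≠ 0
  hn : 0 < n
  hw : ∀ i j k l, w i j * w k l + w k l * w i j
      = (if j = k then w i l else 0) + (if l = i then w k j else 0)
  hsa : ∀ i j, (w i j)ᵀ * sympMat n F = sympMat n F * w i j
  hne : ∀ i, w i i ≠ 0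

namespace JSys

variable {F : Type*} [Field F] {n : ℕ} (σ : JSys F n)

/-- diagonal idempotents -/
def f (i : Fin n) : MK F n := σ.w i i

lemma f_idem (i : Fin n) : σ.f i * σ.f i = σ.f i := by
  have h := σ.hw i i i i
  simp only [if_pos rfl] at h
  exact half σ.hF h

lemma f_orth {i j : Fin n} (h : i ≠ j) : σ.f i * σ.f j = 0 ∧ σ.f j * σ.f i = 0 := by
  have h0 := σ.hw i i j j
  simp only [if_neg h, if_neg (Ne.symm h), add_zero] at h0
  exact orth_of σ.hF (σ.f_idem i) h0

lemma fw_zero {i j k : Fin n} (hi : k ≠ i) (hj : k ≠ j) :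
    σ.f k * σ.w i j = 0 ∧ σ.w i j * σ.f k = 0 := by
  have h0 := σ.hw k k i j
  simp only [if_neg hi, if_neg (Ne.symm hj), add_zero] at h0
  exact orth_of σ.hF (σ.f_idem k) h0

lemma fw {i j : Fin n} (h : i ≠ j) :
    σ.f i * σ.w i j + σ.w i j * σ.f i = σ.w i j := by
  have h0 := σ.hw i i i j
  simpa only [if_pos rfl, if_neg (Ne.symm h), add_zero, ↓reduceIte, f] using h0

lemma wf {i j : Fin n} (h : i ≠ j) :
    σ.w i j * σ.f j + σ.f j * σ.w i j = σ.w i j := by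
  have h0 := σ.hw i j j j
  simpa only [if_pos rfl, if_neg (Ne.symm h), add_zero, ↓reduceIte, f] using h0

lemma w_sq {i j : Fin n} (h : i ≠ j) : σ.w i j * σ.w i j = 0 := by
  have h0 := σ.hw i j i j
  simp only [if_neg (Ne.symm h), add_zero] at h0
  exact half σ.hF (by rw [h0, add_zero])

lemma w_exch {i j : Fin n} (h : i ≠ j) :
    σ.w i j * σ.w j i + σ.w j i * σ.w i j = σ.f i + σ.f j := by
  have h0 := σ.hw i j j i
  simpa only [if_pos rfl, ↓reduceIte, f] using h0

lemma w_chain {i j k : Fin n} (hij : i ≠ j) (hjk : j ≠ k) (hik : i ≠ k) :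
    σ.w i j * σ.w j k + σ.w j k * σ.w i j = σ.w i k := by
  have h0 := σ.hw i j j k
  simpa only [if_pos rfl, if_neg (Ne.symm hik), add_zero, ↓reduceIte] using h0

lemma w_disj {i j k l : Fin n} (hjk : j ≠ k) (hli : l ≠ i) :
    σ.w i j * σ.w k l + σ.w k l * σ.w i j = 0 := by
  have h0 := σ.hw i j k l
  simpa only [if_neg hjk, if_neg hli, add_zero] using h0

/-- upper Peirce components -/
def a (i j : Fin n) : MK F n := σ.f i * σ.w i j

/-- lower Peirce components -/
def b (i j : Fin n) : MK F n := σ.f j * σ.w i j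

/-- key: `f i * w i j = w i j * f j` -/
lemma a_r {i j : Fin n} (h : i ≠ j) : σ.a i j = σ.w i j * σ.f j := by
  have h1 : (σ.f i * σ.w i j + σ.w i j * σ.f i) * σ.f j = σ.w i j * σ.f j := by
    rw [σ.fw h]
  rw [add_mul, mul_assoc (σ.w i j), (σ.f_orth h).1, mul_zero, add_zero] at h1
  have h2 : σ.f i * (σ.w i j * σ.f j + σ.f j * σ.w i j) = σ.f i * σ.w i j := by
    rw [σ.wf h]
  rw [mul_add, ← mul_assoc (σ.f i) (σ.f j), (σ.f_orth h).1, zero_mul, add_zero,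
    ← mul_assoc] at h2
  rw [a, ← h2, h1]

lemma b_r {i j : Fin n} (h : i ≠ j) : σ.b i j = σ.w i j * σ.f i := by
  have h1 : (σ.w i j * σ.f j + σ.f j * σ.w i j) * σ.f i = σ.w i j * σ.f i := by
    rw [σ.wf h]
  rw [add_mul, mul_assoc (σ.w i j), (σ.f_orth (Ne.symm h)).1, mul_zero, zero_add,
    mul_assoc] at h1
  have h2 : σ.f j * (σ.f i * σ.w i j + σ.w i j * σ.f i) = σ.f j * σ.w i j := by
    rw [σ.fw h]
  rw [mul_add, ← mul_assoc (σ.f j) (σ.f i), (σ.f_orth (Ne.symm h)).1, zero_mul,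
    zero_add, ← mul_assoc] at h2
  rw [b, ← h2, mul_assoc]
  exact h1

/-- reassociation helper -/
lemma sand (x y z t : MK F n) : (x * y) * (z * t) = x * (y * z) * t := by
  noncomm_ring

-- absorption lemmas
lemma f_a (i j : Fin n) : σ.f i * σ.a i j = σ.a i j := by
  rw [a, ← mul_assoc, σ.f_idem]

lemma a_f {i j : Fin n} (h : i ≠ j) : σ.a i j * σ.f j = σ.a i j := by
  rw [σ.a_r h, mul_assoc, σ.f_idem]

lemma f_b (i j : Fin n) : σ.f j * σ.b i j = σ.b i j := by
  rw [b, ← mul_assoc, σ.f_idem]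

lemma b_f {i j : Fin n} (h : i ≠ j) : σ.b i j * σ.f i = σ.b i j := by
  rw [σ.b_r h, mul_assoc, σ.f_idem]

lemma a_f_zero {i j k : Fin n} (h : i ≠ j) (hk : k ≠ j) : σ.a i j * σ.f k = 0 := by
  rw [σ.a_r h, mul_assoc, (σ.f_orth (Ne.symm hk)).1, mul_zero]

lemma f_a_zero {i j k : Fin n} (hk : k ≠ i) : σ.f k * σ.a i j = 0 := by
  rw [a, ← mul_assoc, (σ.f_orth hk).1, zero_mul]

lemma b_f_zero {i j k : Fin n} (h : i ≠ j) (hk : k ≠ i) : σ.b i j * σ.f k = 0 := by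
  rw [σ.b_r h, mul_assoc, (σ.f_orth (Ne.symm hk)).1, mul_zero]

lemma f_b_zero {i j k : Fin n} (hk : k ≠ j) : σ.f k * σ.b i j = 0 := by
  rw [b, ← mul_assoc, (σ.f_orth hk).1, zero_mul]

lemma ab_zero {i j : Fin n} (h : i ≠ j) : σ.a i j * σ.b i j = 0 := by
  rw [a, σ.b_r h, sand, σ.w_sq h, mul_zero, zero_mul]

lemma ba_zero {i j : Fin n} (h : i ≠ j) : σ.b i j * σ.a i j = 0 := by
  rw [b, σ.a_r h, sand, σ.w_sq h, mul_zero, zero_mul]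

lemma aa_bb {i j : Fin n} (h : i ≠ j) :
    σ.a i j * σ.a j i + σ.b j i * σ.b i j = σ.f i := by
  have ha : σ.a i j * σ.a j i = σ.f i * (σ.w i j * σ.w j i) * σ.f i := by
    rw [a, σ.a_r (Ne.symm h), sand]
  have hb : σ.b j i * σ.b i j = σ.f i * (σ.w j i * σ.w i j) * σ.f i := by
    rw [b, σ.b_r h, sand]
  rw [ha, hb, ← add_mul, ← mul_add, σ.w_exch h, mul_add, σ.f_idem, (σ.f_orth h).1,
    add_zero, σ.f_idem]

lemma a_chain {i j k : Fin n} (hij : i ≠ j) (hjk : j ≠ k) (hik : i ≠ k) :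
    σ.a i j * σ.a j k = σ.a i k := by
  have h1 : σ.a i j * σ.a j k = σ.f i * (σ.w i j * σ.w j k) * σ.f k := by
    rw [a, σ.a_r hjk, sand]
  have h2 : σ.w i j * σ.w j k = σ.w i k - σ.w j k * σ.w i j := by
    rw [eq_sub_iff_add_eq, σ.w_chain hij hjk hik]
  have h3 : σ.f i * (σ.w j k * σ.w i j) * σ.f k = 0 := by
    rw [← mul_assoc, (σ.fw_zero hij hik).1, zero_mul, zero_mul]
  rw [h1, h2, mul_sub, sub_mul, h3, sub_zero, ← a, σ.a_f hik]

lemma b_chain {i j k : Fin n} (hij : i ≠ j) (hjk : j ≠ k) (hik : i ≠ k) :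
    σ.b j k * σ.b i j = σ.b i k := by
  have h1 : σ.b j k * σ.b i j = σ.f k * (σ.w j k * σ.w i j) * σ.f i := by
    rw [b, σ.b_r hij, sand]
  have h2 : σ.w j k * σ.w i j = σ.w i k - σ.w i j * σ.w j k := by
    rw [eq_sub_iff_add_eq, add_comm, σ.w_chain hij hjk hik]
  have h3 : σ.f k * (σ.w i j * σ.w j k) * σ.f i = 0 := by
    rw [← mul_assoc, (σ.fw_zero (Ne.symm hik) (Ne.symm hjk)).1, zero_mul, zero_mul]
  rw [h1, h2, mul_sub, sub_mul, h3, sub_zero, ← b, σ.b_f hik]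

lemma ab_zero' {k l m : Fin n} (hkl : k ≠ l) (hkm : k ≠ m) (hlm : l ≠ m) :
    σ.a k l * σ.b m l = 0 := by
  have h1 : σ.a k l * σ.b m l = σ.f k * (σ.w k l * σ.w m l) * σ.f m := by
    rw [a, σ.b_r (Ne.symm hlm), sand]
  have h2 : σ.w k l * σ.w m l = -(σ.w m l * σ.w k l) := by
    rw [eq_neg_iff_add_eq_zero]
    exact σ.w_disj hlm (Ne.symm hkl)
  have h3 : σ.f k * (σ.w m l * σ.w k l) * σ.f m = 0 := by
    rw [← mul_assoc, (σ.fw_zero hkm hkl).1, zero_mul, zero_mul]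
  rw [h1, h2, mul_neg, neg_mul, h3, neg_zero]

lemma ba_zero' {k l m : Fin n} (hkl : k ≠ l) (hkm : k ≠ m) (hlm : l ≠ m) :
    σ.b k l * σ.a k m = 0 := by
  have h1 : σ.b k l * σ.a k m = σ.f l * (σ.w k l * σ.w k m) * σ.f m := by
    rw [b, σ.a_r hkm, sand]
  have h2 : σ.w k l * σ.w k m = -(σ.w k m * σ.w k l) := by
    rw [eq_neg_iff_add_eq_zero]
    exact σ.w_disj (Ne.symm hkl) (Ne.symm hkm)
  have h3 : σ.f l * (σ.w k m * σ.w k l) * σ.f m = 0 := by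
    rw [← mul_assoc, (σ.fw_zero (Ne.symm hkl) hlm).1, zero_mul, zero_mul]
  rw [h1, h2, mul_neg, neg_mul, h3, neg_zero]

lemma mstar_w (i j : Fin n) : mstar (σ.w i j) = σ.w i j := mstar_of_sa (σ.hsa i j)

lemma mstar_f (i : Fin n) : mstar (σ.f i) = σ.f i := σ.mstar_w i i

lemma mstar_a {i j : Fin n} (h : i ≠ j) : mstar (σ.a i j) = σ.b i j := by
  rw [a, mstar_mul, σ.mstar_w, mstar_f, ← σ.b_r h]

lemma mstar_b {i j : Fin n} (h : i ≠ j) : mstar (σ.b i j) = σ.a i j := by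
  rw [b, mstar_mul, σ.mstar_w, mstar_f, ← σ.a_r h]

/-! ### rank machinery -/

lemma e0_section_placeholder : True := trivial

end JSys

namespace JSys
variable {F : Type*} [Field F] {n : ℕ} (σ : JSys F n)

lemma rank_eq_finrank (M : MK F n) :
    M.rank = Module.finrank F (LinearMap.range M.mulVecLin) := rfl

lemma rank_zero_imp {M : MK F n} (h : M.rank = 0) : M = 0 := by
  rw [rank_eq_finrank] at h
  have hbot : LinearMap.range M.mulVecLin = ⊥ := Submodule.finrank_eq_zero.mp h
  apply mulVec_ext (N := 0)
  intro v
  have : M.mulVecLin v ∈ LinearMap.range M.mulVecLin := ⟨v, rfl⟩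
  rw [hbot] at this
  simpa [Matrix.mulVecLin_apply] using this

lemma rank_add_of_orth {P Q : MK F n} (hP : P * P = P) (hQ : Q * Q = Q)
    (hPQ : P * Q = 0) (hQP : Q * P = 0) :
    (P + Q) * (P + Q) = P + Q ∧ (P + Q).rank = P.rank + Q.rank := by
  constructor
  · rw [mul_add, add_mul, add_mul, hP, hQ, hPQ, hQP]
    simp
  · have hrange : LinearMap.range (P + Q).mulVecLin
        = LinearMap.range P.mulVecLin ⊔ LinearMap.range Q.mulVecLin := by
      apply le_antisymm
      · rintro x ⟨v, rfl⟩
        rw [Matrix.mulVecLin_apply, Matrix.add_mulVec]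
        exact Submodule.add_mem_sup ⟨v, rfl⟩ ⟨v, rfl⟩
      · apply sup_le
        · rintro x ⟨v, rfl⟩
          refine ⟨P *ᵥ v, ?_⟩
          rw [Matrix.mulVecLin_apply, Matrix.mulVecLin_apply, Matrix.add_mulVec,
            Matrix.mulVec_mulVec, Matrix.mulVec_mulVec, hP, hQP]
          simp
        · rintro x ⟨v, rfl⟩
          refine ⟨Q *ᵥ v, ?_⟩
          rw [Matrix.mulVecLin_apply, Matrix.mulVecLin_apply, Matrix.add_mulVec,
            Matrix.mulVec_mulVec, Matrix.mulVec_mulVec, hQ, hPQ]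
          simp
    have hinf : LinearMap.range P.mulVecLin ⊓ LinearMap.range Q.mulVecLin = ⊥ := by
      rw [Submodule.eq_bot_iff]
      rintro x ⟨⟨v, hv⟩, ⟨u, hu⟩⟩
      rw [Matrix.mulVecLin_apply] at hv hu
      have h1 : P *ᵥ x = x := by
        rw [← hv, Matrix.mulVec_mulVec, hP]
      have h2 : P *ᵥ x = 0 := by
        rw [← hu, Matrix.mulVec_mulVec, hPQ, Matrix.zero_mulVec]
      rw [← h1, h2]
    rw [rank_eq_finrank, rank_eq_finrank, rank_eq_finrank, hrange]
    have := Submodule.finrank_sup_add_finrank_inf_eq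
      (LinearMap.range P.mulVecLin) (LinearMap.range Q.mulVecLin)
    rw [hinf] at this
    simpa using this

lemma sum_f_idem_rank (T : Finset (Fin n)) :
    (∑ i ∈ T, σ.f i) * (∑ i ∈ T, σ.f i) = ∑ i ∈ T, σ.f i ∧
    (∑ i ∈ T, σ.f i).rank = ∑ i ∈ T, (σ.f i).rank := by
  classical
  induction T using Finset.induction_on with
  | empty => simp
  | @insert j T hj ih =>
    have horth1 : σ.f j * (∑ i ∈ T, σ.f i) = 0 := by
      rw [Finset.mul_sum]
      refine Finset.sum_eq_zero fun i hi => ?_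
      have hne : j ≠ i := fun he => hj (by rwa [he])
      exact (σ.f_orth hne).1
    have horth2 : (∑ i ∈ T, σ.f i) * σ.f j = 0 := by
      rw [Finset.sum_mul]
      refine Finset.sum_eq_zero fun i hi => ?_
      have hne : j ≠ i := fun he => hj (by rwa [he])
      exact (σ.f_orth hne).2
    have key := rank_add_of_orth (σ.f_idem j) ih.1 horth1 horth2
    rw [Finset.sum_insert hj, Finset.sum_insert hj]
    exact ⟨key.1, by rw [key.2, ih.2]⟩

/-- the sum of the diagonal idempotents -/
def e0 : MK F n := ∑ i, σ.f i

lemma f_ne_zero (i : Fin n) : σ.f i ≠ 0 := σ.hne i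

lemma rank_f_pos (i : Fin n) : 1 ≤ (σ.f i).rank := by
  rcases Nat.eq_zero_or_pos (σ.f i).rank with h | h
  · exact absurd (rank_zero_imp h) (σ.f_ne_zero i)
  · exact h

lemma rank_f_eq (i0 i : Fin n) : (σ.f i).rank = (σ.f i0).rank := by
  rcases eq_or_ne i i0 with rfl | hne
  · rfl
  · set b0 : MK F n := σ.a i0 i + σ.b i i0 with hb0
    set c0 : MK F n := σ.b i0 i + σ.a i i0 with hc0
    have hbc : b0 * c0 = σ.f i0 := by
      rw [hb0, hc0, add_mul, mul_add, mul_add, σ.ab_zero (Ne.symm hne),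
        σ.ba_zero hne, zero_add, add_zero, σ.aa_bb (Ne.symm hne)]
    have hcb : c0 * b0 = σ.f i := by
      rw [hc0, hb0, add_mul, mul_add, mul_add, σ.ba_zero (Ne.symm hne),
        σ.ab_zero hne, zero_add, add_zero, add_comm, σ.aa_bb hne]
    have hb0f : b0 = σ.f i0 * (σ.w i0 i + σ.w i i0) := by
      rw [hb0, mul_add]; rfl
    have hc0f : c0 = σ.f i * (σ.w i0 i + σ.w i i0) := by
      rw [hc0, mul_add]; rfl
    have h1 : (σ.f i0).rank ≤ (σ.f i).rank := by
      calc (σ.f i0).rank = (b0 * c0).rank := by rw [hbc]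
        _ ≤ c0.rank := Matrix.rank_mul_le_right _ _
        _ ≤ (σ.f i).rank := by rw [hc0f]; exact Matrix.rank_mul_le_left _ _
    have h2 : (σ.f i).rank ≤ (σ.f i0).rank := by
      calc (σ.f i).rank = (c0 * b0).rank := by rw [hcb]
        _ ≤ b0.rank := Matrix.rank_mul_le_right _ _
        _ ≤ (σ.f i0).rank := by rw [hb0f]; exact Matrix.rank_mul_le_left _ _
    omega

lemma om_smul_right (u v : Fin n ⊕ Fin n → F) (c : F) : om u (c • v) = c * om u v := by
  unfold om
  rw [Matrix.mulVec_smul]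
  rw [dotProduct_smul, smul_eq_mul]

lemma ng {i : Fin n} {u : Fin n ⊕ Fin n → F} (hu : σ.f i *ᵥ u = u)
    (h : ∀ y, om u (σ.f i *ᵥ y) = 0) : u = 0 := by
  apply om_nondeg
  intro v
  rw [← hu, om_mulVec_left, σ.mstar_f]
  exact h v

lemma rank_f_ne_one (i : Fin n) : (σ.f i).rank ≠ 1 := by
  intro h1
  have hex : ∃ v, σ.f i *ᵥ v ≠ 0 := by
    by_contra hc
    push_neg at hc
    exact σ.f_ne_zero i (mulVec_ext (N := 0) (by simpa using hc))
  obtain ⟨v, hv⟩ := hex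
  set u := σ.f i *ᵥ v with hu
  have hfu : σ.f i *ᵥ u = u := by
    rw [hu, Matrix.mulVec_mulVec, σ.f_idem]
  have hspan : Submodule.span F {u} = LinearMap.range (σ.f i).mulVecLin := by
    apply Submodule.eq_of_le_of_finrank_le
    · rw [Submodule.span_singleton_le_iff_mem]
      exact ⟨v, rfl⟩
    · rw [← rank_eq_finrank, h1, finrank_span_singleton hv]
  have hmem : ∀ y, ∃ c : F, c • u = σ.f i *ᵥ y := by
    intro y
    have : σ.f i *ᵥ y ∈ Submodule.span F {u} := by
      rw [hspan]; exact ⟨y, rfl⟩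
    exact Submodule.mem_span_singleton.mp this
  have hzero : ∀ y, om u (σ.f i *ᵥ y) = 0 := by
    intro y
    obtain ⟨c, hc⟩ := hmem y
    rw [← hc, om_smul_right, om_self σ.hF, mul_zero]
  exact hv (σ.ng hfu hzero)

lemma rank_f_two (i : Fin n) : (σ.f i).rank = 2 := by
  set i0 : Fin n := ⟨0, σ.hn⟩ with hi0
  set m := (σ.f i0).rank with hm
  have hbound : σ.e0.rank ≤ n + n := by
    have := Matrix.rank_le_card_width σ.e0
    simpa [Fintype.card_sum, Fintype.card_fin] using this
  have hsum : σ.e0.rank = n * m := by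
    rw [e0, (σ.sum_f_idem_rank Finset.univ).2]
    rw [Finset.sum_congr rfl (fun j _ => σ.rank_f_eq i0 j)]
    simp [Finset.sum_const, mul_comm]
    exact Or.inl hm.symm
  have hle : m ≤ 2 := by
    have : n * m ≤ n * 2 := by omega
    exact Nat.le_of_mul_le_mul_left this σ.hn
  have h1 : 1 ≤ m := σ.rank_f_pos i0
  have h2 : m ≠ 1 := σ.rank_f_ne_one i0
  have : m = 2 := by omega
  rw [σ.rank_f_eq i0 i, ← hm, this]

lemma e0_one : σ.e0 = 1 := by
  have hidem : σ.e0 * σ.e0 = σ.e0 := (σ.sum_f_idem_rank Finset.univ).1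
  have hrank : σ.e0.rank = n + n := by
    rw [e0, (σ.sum_f_idem_rank Finset.univ).2]
    rw [Finset.sum_congr rfl (fun j _ => σ.rank_f_two j)]
    simp [Finset.sum_const]
    omega
  have htop : LinearMap.range σ.e0.mulVecLin = ⊤ := by
    apply Submodule.eq_top_of_finrank_eq
    rw [← rank_eq_finrank, hrank, Module.finrank_pi]
    simp [Fintype.card_sum, Fintype.card_fin]
  apply mulVec_ext
  intro x
  have hx : x ∈ LinearMap.range σ.e0.mulVecLin := htop ▸ Submodule.mem_top
  obtain ⟨y, hy⟩ := hx
  rw [Matrix.mulVecLin_apply] at hy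
  rw [Matrix.one_mulVec, ← hy, Matrix.mulVec_mulVec, hidem]

lemma peirce {i j : Fin n} (h : i ≠ j) : σ.w i j = σ.a i j + σ.b i j := by
  classical
  have h1 : (∑ k, σ.f k) * σ.w i j = σ.w i j := by
    rw [← e0, σ.e0_one, one_mul]
  rw [Finset.sum_mul] at h1
  have h2 : ∑ k ∈ ({i, j} : Finset (Fin n)), σ.f k * σ.w i j
      = ∑ k, σ.f k * σ.w i j := by
    apply Finset.sum_subset (Finset.subset_univ _)
    intro k _ hk
    simp only [Finset.mem_insert, Finset.mem_singleton, not_or] at hk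
    exact (σ.fw_zero hk.1 hk.2).1
  rw [← h2, Finset.sum_pair h] at h1
  rw [← h1]; rfl

end JSys


namespace JSys
variable {F : Type*} [Field F] {n : ℕ} (σ : JSys F n)

/-- if `Y * X = f i` for Peirce-compatible `X, Y`, then `X * Y = f j` -/
lemma flip_idem {i j : Fin n} {X Y : MK F n} (hYX : Y * X = σ.f i)
    (hfX : σ.f j * X = X) (hXf : X * σ.f i = X) (hYf : Y * σ.f j = Y) :
    X * Y = σ.f j := by
  set P : MK F n := X * Y with hP
  have hPP : P * P = P := by
    rw [hP, sand, hYX, hXf]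
  have hfiP : σ.f i = Y * P * X := by
    rw [hP, ← sand, hYX, σ.f_idem]
  have hrank : 2 ≤ P.rank := by
    calc 2 = (σ.f i).rank := (σ.rank_f_two i).symm
      _ = (Y * (P * X)).rank := by rw [← mul_assoc, ← hfiP]
      _ ≤ (P * X).rank := Matrix.rank_mul_le_right _ _
      _ ≤ P.rank := Matrix.rank_mul_le_left _ _
  have hle : LinearMap.range P.mulVecLin ≤ LinearMap.range (σ.f j).mulVecLin := by
    rintro x ⟨v, rfl⟩
    refine ⟨(X * Y) *ᵥ v, ?_⟩
    rw [Matrix.mulVecLin_apply, Matrix.mulVecLin_apply, Matrix.mulVec_mulVec]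
    rw [← mul_assoc, hfX, ← hP]
  have heq : LinearMap.range P.mulVecLin = LinearMap.range (σ.f j).mulVecLin := by
    apply Submodule.eq_of_le_of_finrank_le hle
    rw [← rank_eq_finrank, ← rank_eq_finrank, σ.rank_f_two j]
    exact hrank
  have hPfj : P * σ.f j = σ.f j := by
    apply mulVec_ext
    intro x
    have hmem : σ.f j *ᵥ x ∈ LinearMap.range P.mulVecLin := by
      rw [heq]; exact ⟨x, rfl⟩
    obtain ⟨y, hy⟩ := hmem
    rw [Matrix.mulVecLin_apply] at hy
    rw [← Matrix.mulVec_mulVec, ← hy, Matrix.mulVec_mulVec, hPP, hy]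
  have hPf : P * σ.f j = P := by
    rw [hP, mul_assoc, hYf]
  rw [← hPf, hPfj]

lemma A_ne_zero {i0 i1 : Fin n} (h01 : i0 ≠ i1) : σ.a i0 i1 * σ.a i1 i0 ≠ 0 := by
  intro hA0
  have hB : σ.b i1 i0 * σ.b i0 i1 = σ.f i0 := by
    have := σ.aa_bb h01
    rwa [hA0, zero_add] at this
  have hP : σ.b i0 i1 * σ.b i1 i0 = σ.f i1 :=
    σ.flip_idem hB (σ.f_b i0 i1) (σ.b_f h01) (σ.b_f (Ne.symm h01))
  have ha : σ.a i0 i1 = 0 := by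
    have h1 : σ.a i0 i1 = σ.a i0 i1 * (σ.b i0 i1 * σ.b i1 i0) := by
      rw [hP, σ.a_f h01]
    rw [h1, ← mul_assoc, σ.ab_zero h01, zero_mul]
  have hb : σ.b i0 i1 = 0 := by
    rw [← σ.mstar_a h01, ha, mstar_zero]
  rw [hb, mul_zero] at hB
  exact σ.f_ne_zero i0 hB.symm

lemma B_ne_zero {i0 i1 : Fin n} (h01 : i0 ≠ i1) : σ.b i1 i0 * σ.b i0 i1 ≠ 0 := by
  intro hB0
  have hA : σ.a i0 i1 * σ.a i1 i0 = σ.f i0 := by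
    have := σ.aa_bb h01
    rwa [hB0, add_zero] at this
  have hP : σ.a i1 i0 * σ.a i0 i1 = σ.f i1 :=
    σ.flip_idem hA (σ.f_a i1 i0) (σ.a_f (Ne.symm h01)) (σ.a_f h01)
  have hb : σ.b i0 i1 = 0 := by
    have h1 : σ.b i0 i1 = (σ.a i1 i0 * σ.a i0 i1) * σ.b i0 i1 := by
      rw [hP, σ.f_b]
    rw [h1, mul_assoc, σ.ab_zero h01, mul_zero]
  have ha : σ.a i0 i1 = 0 := by
    rw [← σ.mstar_b h01, hb, mstar_zero]
  rw [ha, zero_mul] at hA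
  exact σ.f_ne_zero i0 hA.symm

lemma A_fix {i0 i1 : Fin n} (h01 : i0 ≠ i1) :
    (σ.a i0 i1 * σ.a i1 i0) * σ.a i0 i1 = σ.a i0 i1 := by
  have hAB := σ.aa_bb h01
  have hBfix : (σ.b i1 i0 * σ.b i0 i1) * σ.a i0 i1 = 0 := by
    rw [mul_assoc, σ.ba_zero h01, mul_zero]
  have := congrArg (· * σ.a i0 i1) hAB
  simp only [add_mul] at this
  rw [hBfix, add_zero, σ.f_a] at this
  exact this

lemma A_kill {i0 i1 : Fin n} (h01 : i0 ≠ i1) :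
    (σ.a i0 i1 * σ.a i1 i0) * σ.b i1 i0 = 0 := by
  rw [mul_assoc, σ.ab_zero (Ne.symm h01), mul_zero]

lemma Al_eq {i0 i1 l : Fin n} (h01 : i0 ≠ i1) (hl0 : l ≠ i0) :
    σ.a i0 l * σ.a l i0 = σ.a i0 i1 * σ.a i1 i0 := by
  rcases eq_or_ne l i1 with rfl | hl1
  · rfl
  · have hXa : (σ.a i0 l * σ.a l i0) * σ.a i0 i1 = σ.a i0 i1 := by
      rw [mul_assoc, σ.a_chain hl0 h01 hl1, σ.a_chain (Ne.symm hl0) hl1 h01]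
    have hXb : (σ.a i0 l * σ.a l i0) * σ.b i1 i0 = 0 := by
      rw [mul_assoc, σ.ab_zero' hl0 hl1 h01, mul_zero]
    have hXf : (σ.a i0 l * σ.a l i0) * σ.f i0 = σ.a i0 l * σ.a l i0 := by
      rw [mul_assoc, σ.a_f hl0]
    calc σ.a i0 l * σ.a l i0
        = (σ.a i0 l * σ.a l i0) * σ.f i0 := hXf.symm
      _ = (σ.a i0 l * σ.a l i0) * (σ.a i0 i1 * σ.a i1 i0 + σ.b i1 i0 * σ.b i0 i1) := by
          rw [σ.aa_bb h01]
      _ = ((σ.a i0 l * σ.a l i0) * σ.a i0 i1) * σ.a i1 i0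
          + ((σ.a i0 l * σ.a l i0) * σ.b i1 i0) * σ.b i0 i1 := by
          rw [mul_add, ← mul_assoc, ← mul_assoc]
      _ = σ.a i0 i1 * σ.a i1 i0 := by rw [hXa, hXb, zero_mul, add_zero]

lemma A_idem {i0 i1 : Fin n} (h01 : i0 ≠ i1) :
    (σ.a i0 i1 * σ.a i1 i0) * (σ.a i0 i1 * σ.a i1 i0) = σ.a i0 i1 * σ.a i1 i0 := by
  rw [← mul_assoc, σ.A_fix h01]

lemma AB_zero {i0 i1 : Fin n} (h01 : i0 ≠ i1) :
    (σ.a i0 i1 * σ.a i1 i0) * (σ.b i1 i0 * σ.b i0 i1) = 0 := by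
  rw [← mul_assoc, σ.A_kill h01, zero_mul]

lemma BA_zero {i0 i1 : Fin n} (h01 : i0 ≠ i1) :
    (σ.b i1 i0 * σ.b i0 i1) * (σ.a i0 i1 * σ.a i1 i0) = 0 := by
  rw [sand, σ.ba_zero h01, mul_zero, zero_mul]

lemma fA {i0 i1 : Fin n} :
    σ.f i0 * (σ.a i0 i1 * σ.a i1 i0) = σ.a i0 i1 * σ.a i1 i0 := by
  rw [← mul_assoc, σ.f_a]

lemma fB {i0 i1 : Fin n} :
    σ.f i0 * (σ.b i1 i0 * σ.b i0 i1) = σ.b i1 i0 * σ.b i0 i1 := by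
  rw [← mul_assoc, σ.f_b]

lemma Bf {i0 i1 : Fin n} (h01 : i0 ≠ i1) :
    (σ.b i1 i0 * σ.b i0 i1) * σ.f i0 = σ.b i1 i0 * σ.b i0 i1 := by
  rw [mul_assoc, σ.b_f h01]

lemma B_idem {i0 i1 : Fin n} (h01 : i0 ≠ i1) :
    (σ.b i1 i0 * σ.b i0 i1) * (σ.b i1 i0 * σ.b i0 i1) = σ.b i1 i0 * σ.b i0 i1 := by
  have h1 : (σ.b i1 i0 * σ.b i0 i1) * σ.f i0 = σ.b i1 i0 * σ.b i0 i1 := σ.Bf h01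
  rw [← σ.aa_bb h01, mul_add, σ.BA_zero h01, zero_add] at h1
  exact h1

lemma Bl_eq {i0 i1 l : Fin n} (h01 : i0 ≠ i1) (hl0 : l ≠ i0) :
    σ.b l i0 * σ.b i0 l = σ.b i1 i0 * σ.b i0 i1 := by
  have h1 := σ.aa_bb (Ne.symm hl0)
  have h2 := σ.aa_bb h01
  rw [σ.Al_eq h01 hl0] at h1
  have := h1.trans h2.symm
  exact add_left_cancel this

end JSys

namespace JSys
variable {F : Type*} [Field F] {n : ℕ}

lemma exists_pq (σ : JSys F n) (hn2 : 1 < n) :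
    ∃ p q : Fin n → (Fin n ⊕ Fin n → F),
      (∀ i j l, σ.w i j *ᵥ p l = if j = l then p i else 0) ∧
      (∀ i j l, σ.w i j *ᵥ q l = if i = l then q j else 0) ∧
      (∀ i j, om (p i) (q j) = if i = j then (1:F) else 0) ∧
      (∀ i j, om (p i) (p j) = 0) ∧
      (∀ i j, om (q i) (q j) = 0) := by
  classical
  have hn : 0 < n := σ.hn
  set i0 : Fin n := ⟨0, hn⟩ with hi0def
  set i1 : Fin n := ⟨1, hn2⟩ with hi1def
  have h01 : i0 ≠ i1 := by simp [hi0def, hi1def, Fin.ext_iff]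
  set A : MK F n := σ.a i0 i1 * σ.a i1 i0 with hAdef
  set B : MK F n := σ.b i1 i0 * σ.b i0 i1 with hBdef
  have hAB : A + B = σ.f i0 := σ.aa_bb h01
  have hAidem : A * A = A := σ.A_idem h01
  have hBidem : B * B = B := σ.B_idem h01
  have hABz : A * B = 0 := σ.AB_zero h01
  have hBAz : B * A = 0 := σ.BA_zero h01
  have hfA : σ.f i0 * A = A := σ.fA
  have hfB : σ.f i0 * B = B := σ.fB
  have hAne : A ≠ 0 := σ.A_ne_zero h01
  have hAl : ∀ l, l ≠ i0 → σ.a i0 l * σ.a l i0 = A := fun l hl => σ.Al_eq h01 hl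
  have hBl : ∀ l, l ≠ i0 → σ.b l i0 * σ.b i0 l = B := fun l hl => σ.Bl_eq h01 hl
  have hmA : mstar A = B := by
    rw [hAdef, mstar_mul, σ.mstar_a (Ne.symm h01), σ.mstar_a h01, hBdef]
  -- choice of p0
  have hex : ∃ v, A *ᵥ v ≠ 0 := by
    by_contra hc
    push_neg at hc
    exact hAne (mulVec_ext (N := 0) (fun v => by simpa using hc v))
  obtain ⟨v, hv⟩ := hex
  set p0 := A *ᵥ v with hp0def
  have hAp0 : A *ᵥ p0 = p0 := by rw [hp0def, Matrix.mulVec_mulVec, hAidem]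
  have hfp0 : σ.f i0 *ᵥ p0 = p0 := by rw [hp0def, Matrix.mulVec_mulVec, hfA]
  have hBp0 : B *ᵥ p0 = 0 := by
    rw [hp0def, Matrix.mulVec_mulVec, hBAz, Matrix.zero_mulVec]
  -- choice of q0
  have hexq : ∃ y, om p0 (B *ᵥ y) ≠ 0 := by
    by_contra hc
    push_neg at hc
    have hA' : ∀ y, om p0 (A *ᵥ y) = 0 := by
      intro y
      rw [om_mulVec_right, hmA, hBp0]
      exact om_zero_left y
    have hall : ∀ y, om p0 (σ.f i0 *ᵥ y) = 0 := by
      intro y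
      rw [← hAB, Matrix.add_mulVec, om_add_right, hA' y, hc y, add_zero]
    exact hv (σ.ng hfp0 hall)
  obtain ⟨y0, hy0⟩ := hexq
  set q0 : Fin n ⊕ Fin n → F := (om p0 (B *ᵥ y0))⁻¹ • (B *ᵥ y0) with hq0def
  have hBq0 : B *ᵥ q0 = q0 := by
    rw [hq0def, Matrix.mulVec_smul, Matrix.mulVec_mulVec, hBidem]
  have hfq0 : σ.f i0 *ᵥ q0 = q0 := by
    rw [hq0def, Matrix.mulVec_smul, Matrix.mulVec_mulVec, hfB]
  have hom1 : om p0 q0 = 1 := by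
    rw [hq0def, om_smul_right]
    exact inv_mul_cancel₀ hy0
  -- the bases
  let p : Fin n → (Fin n ⊕ Fin n → F) := fun l => if l = i0 then p0 else σ.a l i0 *ᵥ p0
  let q : Fin n → (Fin n ⊕ Fin n → F) := fun l => if l = i0 then q0 else σ.b i0 l *ᵥ q0
  have hp_at : ∀ l, p l = if l = i0 then p0 else σ.a l i0 *ᵥ p0 := fun l => rfl
  have hq_at : ∀ l, q l = if l = i0 then q0 else σ.b i0 l *ᵥ q0 := fun l => rfl
  have hp_0 : p i0 = p0 := by rw [hp_at, if_pos rfl]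
  have hq_0 : q i0 = q0 := by rw [hq_at, if_pos rfl]
  have hp_ne : ∀ l, l ≠ i0 → p l = σ.a l i0 *ᵥ p0 := fun l hl => by
    rw [hp_at, if_neg hl]
  have hq_ne : ∀ l, l ≠ i0 → q l = σ.b i0 l *ᵥ q0 := fun l hl => by
    rw [hq_at, if_neg hl]
  have hfp : ∀ l, σ.f l *ᵥ p l = p l := by
    intro l
    by_cases hl : l = i0
    · subst hl; rw [hp_0]; exact hfp0
    · rw [hp_ne l hl, Matrix.mulVec_mulVec, σ.f_a]
  have hfq : ∀ l, σ.f l *ᵥ q l = q l := by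
    intro l
    by_cases hl : l = i0
    · subst hl; rw [hq_0]; exact hfq0
    · rw [hq_ne l hl, Matrix.mulVec_mulVec, σ.f_b]
  have hfpz : ∀ k l, k ≠ l → σ.f k *ᵥ p l = 0 := by
    intro k l hkl
    rw [← hfp l, Matrix.mulVec_mulVec, (σ.f_orth hkl).1, Matrix.zero_mulVec]
  have hfqz : ∀ k l, k ≠ l → σ.f k *ᵥ q l = 0 := by
    intro k l hkl
    rw [← hfq l, Matrix.mulVec_mulVec, (σ.f_orth hkl).1, Matrix.zero_mulVec]
  refine ⟨p, q, ?_, ?_, ?_, ?_, ?_⟩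
  · -- action on p
    intro i j l
    by_cases hij : i = j
    · subst hij
      by_cases hil : i = l
      · subst hil; rw [if_pos rfl]; exact hfp i
      · rw [if_neg hil]; exact hfpz i l hil
    · rw [σ.peirce hij, Matrix.add_mulVec]
      by_cases hjl : j = l
      · subst hjl
        rw [if_pos rfl]
        have hb : σ.b i j *ᵥ p j = 0 := by
          rw [← hfp j, Matrix.mulVec_mulVec, σ.b_f_zero hij (Ne.symm hij),
            Matrix.zero_mulVec]
        rw [hb, add_zero]
        by_cases hj0 : j = i0
        · subst hj0
          rw [hp_0, hp_ne i hij]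
        · by_cases hi0 : i = i0
          · subst hi0
            rw [hp_0, hp_ne j hj0, Matrix.mulVec_mulVec, hAl j hj0, hAp0]
          · rw [hp_ne j hj0, hp_ne i hi0, Matrix.mulVec_mulVec,
              σ.a_chain hij hj0 hi0]
      · rw [if_neg hjl]
        by_cases hil : i = l
        · subst hil
          have ha : σ.a i j *ᵥ p i = 0 := by
            rw [← hfp i, Matrix.mulVec_mulVec, σ.a_f_zero hij hij, Matrix.zero_mulVec]
          rw [ha, zero_add]
          by_cases hi0 : i = i0
          · subst hi0
            rw [hp_0, ← hAp0, Matrix.mulVec_mulVec, ← hAl j (Ne.symm hij),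
              ← mul_assoc, σ.ba_zero hij, zero_mul, Matrix.zero_mulVec]
          · by_cases hj0 : j = i0
            · subst hj0
              rw [hp_ne i hi0, Matrix.mulVec_mulVec, σ.ba_zero hij, Matrix.zero_mulVec]
            · rw [hp_ne i hi0, Matrix.mulVec_mulVec, σ.ba_zero' hij hi0 hj0,
                Matrix.zero_mulVec]
        · have ha : σ.a i j *ᵥ p l = 0 := by
            rw [← hfp l, Matrix.mulVec_mulVec, σ.a_f_zero hij (Ne.symm hjl),
              Matrix.zero_mulVec]
          have hb : σ.b i j *ᵥ p l = 0 := by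
            rw [← hfp l, Matrix.mulVec_mulVec, σ.b_f_zero hij (Ne.symm hil),
              Matrix.zero_mulVec]
          rw [ha, hb, add_zero]
  · -- action on q
    intro i j l
    by_cases hij : i = j
    · subst hij
      by_cases hil : i = l
      · subst hil; rw [if_pos rfl]; exact hfq i
      · rw [if_neg hil]; exact hfqz i l hil
    · rw [σ.peirce hij, Matrix.add_mulVec]
      by_cases hil : i = l
      · subst hil
        rw [if_pos rfl]
        have ha : σ.a i j *ᵥ q i = 0 := by
          rw [← hfq i, Matrix.mulVec_mulVec, σ.a_f_zero hij hij, Matrix.zero_mulVec]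
        rw [ha, zero_add]
        by_cases hi0 : i = i0
        · subst hi0
          rw [hq_0, hq_ne j (Ne.symm hij)]
        · by_cases hj0 : j = i0
          · subst hj0
            rw [hq_ne i hi0, hq_0, Matrix.mulVec_mulVec, hBl i hi0, hBq0]
          · rw [hq_ne i hi0, hq_ne j hj0, Matrix.mulVec_mulVec,
              σ.b_chain (Ne.symm hi0) hij (Ne.symm hj0)]
      · rw [if_neg hil]
        by_cases hjl : j = l
        · subst hjl
          have hb : σ.b i j *ᵥ q j = 0 := by
            rw [← hfq j, Matrix.mulVec_mulVec, σ.b_f_zero hij (Ne.symm hij),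
              Matrix.zero_mulVec]
          rw [hb, add_zero]
          by_cases hj0 : j = i0
          · subst hj0
            rw [hq_0, ← hBq0, Matrix.mulVec_mulVec, ← hBl i hij,
              ← mul_assoc, σ.ab_zero hij, zero_mul, Matrix.zero_mulVec]
          · by_cases hi0 : i = i0
            · subst hi0
              rw [hq_ne j hj0, Matrix.mulVec_mulVec, σ.ab_zero hij, Matrix.zero_mulVec]
            · rw [hq_ne j hj0, Matrix.mulVec_mulVec, σ.ab_zero' hij hi0 hj0,
                Matrix.zero_mulVec]
        · have ha : σ.a i j *ᵥ q l = 0 := by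
            rw [← hfq l, Matrix.mulVec_mulVec, σ.a_f_zero hij (Ne.symm hjl),
              Matrix.zero_mulVec]
          have hb : σ.b i j *ᵥ q l = 0 := by
            rw [← hfq l, Matrix.mulVec_mulVec, σ.b_f_zero hij (Ne.symm hil),
              Matrix.zero_mulVec]
          rw [ha, hb, add_zero]
  · -- om p q
    intro i j
    by_cases hij : i = j
    · subst hij
      rw [if_pos rfl]
      by_cases hi0 : i = i0
      · subst hi0; rw [hp_0, hq_0]; exact hom1
      · rw [hp_ne i hi0, hq_ne i hi0, om_mulVec_left, σ.mstar_a hi0,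
          Matrix.mulVec_mulVec, hBl i hi0, hBq0]
        exact hom1
    · rw [if_neg hij, ← hfp i, om_mulVec_left, σ.mstar_f, hfqz i j hij, om_zero_right]
  · -- om p p
    intro i j
    by_cases hij : i = j
    · subst hij; exact om_self σ.hF (p i)
    · rw [← hfp i, om_mulVec_left, σ.mstar_f, hfpz i j hij, om_zero_right]
  · -- om q q
    intro i j
    by_cases hij : i = j
    · subst hij; exact om_self σ.hF (q i)
    · rw [← hfq i, om_mulVec_left, σ.mstar_f, hfqz i j hij, om_zero_right]

end JSys

namespace JSys
variable {F : Type*} [Field F] {n : ℕ}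

lemma sum_mulVec {α : Type*} [DecidableEq α] (s : Finset α) (M : α → MK F n)
    (v : Fin n ⊕ Fin n → F) :
    (∑ i ∈ s, M i) *ᵥ v = ∑ i ∈ s, M i *ᵥ v := by
  induction s using Finset.induction_on with
  | empty => simp
  | @insert a s ha ih =>
    rw [Finset.sum_insert ha, Finset.sum_insert ha, Matrix.add_mulVec, ih]

lemma build (σ : JSys F n) (p q : Fin n → (Fin n ⊕ Fin n → F))
    (hp : ∀ i j l, σ.w i j *ᵥ p l = if j = l then p i else 0)
    (hq : ∀ i j l, σ.w i j *ᵥ q l = if i = l then q j else 0)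
    (hpq : ∀ i j, om (p i) (q j) = if i = j then (1:F) else 0)
    (hpp : ∀ i j, om (p i) (p j) = 0)
    (hqq : ∀ i j, om (q i) (q j) = 0) :
    ∃ Q : MK F n, Qᵀ * sympMat n F * Q = sympMat n F ∧ IsUnit Q.det ∧
      ∀ X : Matrix (Fin n) (Fin n) F,
        (∑ i, ∑ j, X i j • σ.w i j) * Q = Q * Matrix.fromBlocks X 0 0 Xᵀ := by
  classical
  set Q : MK F n :=
    Matrix.of fun r c => Sum.elim (fun i => p i r) (fun i => q i r) c with hQdef
  have hQS : Qᵀ * sympMat n F * Q = sympMat n F := by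
    rw [Matrix.mul_assoc]
    ext a b
    have key : (Qᵀ * (sympMat n F * Q)) a b
        = om (fun r => Q r a) (fun r => Q r b) := by
      simp only [Matrix.mul_apply, om, Matrix.mulVec, dotProduct,
        Matrix.transpose_apply]
    rw [key]
    cases a with
    | inl i =>
      cases b with
      | inl j =>
        have h1 : (fun r => Q r (Sum.inl i)) = p i := rfl
        have h2 : (fun r => Q r (Sum.inl j)) = p j := rfl
        rw [h1, h2, hpp i j]
        simp [sympMat]
      | inr j =>
        have h1 : (fun r => Q r (Sum.inl i)) = p i := rfl
        have h2 : (fun r => Q r (Sum.inr j)) = q j := rfl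
        rw [h1, h2, hpq i j]
        simp [sympMat, Matrix.one_apply]
    | inr i =>
      cases b with
      | inl j =>
        have h1 : (fun r => Q r (Sum.inr i)) = q i := rfl
        have h2 : (fun r => Q r (Sum.inl j)) = p j := rfl
        rw [h1, h2, om_skew, hpq j i]
        simp [sympMat, Matrix.one_apply, eq_comm]
      | inr j =>
        have h1 : (fun r => Q r (Sum.inr i)) = q i := rfl
        have h2 : (fun r => Q r (Sum.inr j)) = q j := rfl
        rw [h1, h2, hqq i j]
        simp [sympMat]
  have hdetS : IsUnit (sympMat n F).det := by
    have h1 : sympMat n F * (-(sympMat n F)) = 1 := by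
      rw [mul_neg, S_mul_S, neg_neg]
    exact Matrix.isUnit_det_of_right_inverse h1
  have hdetQ : IsUnit Q.det := by
    have h2 := congrArg Matrix.det hQS
    rw [Matrix.det_mul, Matrix.det_mul, Matrix.det_transpose] at h2
    have hSne : (sympMat n F).det ≠ 0 := hdetS.ne_zero
    have h4 : Q.det * Q.det = 1 := by
      apply mul_right_cancel₀ hSne
      rw [one_mul]
      linear_combination h2
    exact IsUnit.of_mul_eq_one _ h4
  refine ⟨Q, hQS, hdetQ, ?_⟩
  intro X
  have hvp : ∀ l, (∑ i, ∑ j, X i j • σ.w i j) *ᵥ p l = ∑ i, X i l • p i := by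
    intro l
    rw [sum_mulVec]
    refine Finset.sum_congr rfl fun i _ => ?_
    rw [sum_mulVec]
    have hterm : ∀ j, (X i j • σ.w i j) *ᵥ p l = if j = l then X i j • p i else 0 := by
      intro j
      rw [Matrix.smul_mulVec, hp i j l]
      split_ifs with h
      · rfl
      · rw [smul_zero]
    rw [Finset.sum_congr rfl fun j _ => hterm j]
    have hcollapse := Finset.sum_ite_eq' Finset.univ l (fun j => X i j • p i)
    simp only [Finset.mem_univ, if_pos] at hcollapse
    exact hcollapse
  have hvq : ∀ l, (∑ i, ∑ j, X i j • σ.w i j) *ᵥ q l = ∑ j, X l j • q j := by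
    intro l
    rw [sum_mulVec]
    have houter : ∀ i, (∑ j, X i j • σ.w i j) *ᵥ q l
        = if i = l then ∑ j, X i j • q j else 0 := by
      intro i
      rw [sum_mulVec]
      have hterm : ∀ j, (X i j • σ.w i j) *ᵥ q l = if i = l then X i j • q j else 0 := by
        intro j
        rw [Matrix.smul_mulVec, hq i j l]
        split_ifs with h
        · rfl
        · rw [smul_zero]
      rw [Finset.sum_congr rfl fun j _ => hterm j]
      split_ifs with h
      · rfl
      · exact Finset.sum_const_zero
    rw [Finset.sum_congr rfl fun i _ => houter i]
    have hcollapse := Finset.sum_ite_eq' Finset.univ l (fun i => ∑ j, X i j • q j)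
    simp only [Finset.mem_univ, if_pos] at hcollapse
    exact hcollapse
  ext r c
  cases c with
  | inl jc =>
    have hL : ((∑ i, ∑ j, X i j • σ.w i j) * Q) r (Sum.inl jc)
        = ((∑ i, ∑ j, X i j • σ.w i j) *ᵥ p jc) r := rfl
    rw [hL, hvp jc, Matrix.mul_apply, Fintype.sum_sum_type]
    simp only [Matrix.fromBlocks_apply₁₁, Matrix.fromBlocks_apply₂₁,
      Matrix.zero_apply, mul_zero, Finset.sum_const_zero, add_zero,
      Finset.sum_apply, Pi.smul_apply, smul_eq_mul]
    exact Finset.sum_congr rfl fun i _ => mul_comm _ _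
  | inr jc =>
    have hL : ((∑ i, ∑ j, X i j • σ.w i j) * Q) r (Sum.inr jc)
        = ((∑ i, ∑ j, X i j • σ.w i j) *ᵥ q jc) r := rfl
    rw [hL, hvq jc, Matrix.mul_apply, Fintype.sum_sum_type]
    simp only [Matrix.fromBlocks_apply₁₂, Matrix.fromBlocks_apply₂₂,
      Matrix.zero_apply, mul_zero, Finset.sum_const_zero, zero_add,
      Finset.sum_apply, Pi.smul_apply, smul_eq_mul, Matrix.transpose_apply]
    exact Finset.sum_congr rfl fun i _ => mul_comm _ _

end JSys

namespace JSys
variable {F : Type*} [Field F] {n : ℕ}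

lemma exists_Q (σ : JSys F n) :
    ∃ Q : MK F n, Qᵀ * sympMat n F * Q = sympMat n F ∧ IsUnit Q.det ∧
      ∀ X : Matrix (Fin n) (Fin n) F,
        (∑ i, ∑ j, X i j • σ.w i j) * Q = Q * Matrix.fromBlocks X 0 0 Xᵀ := by
  classical
  rcases lt_or_ge 1 n with hn2 | hn1
  · obtain ⟨p, q, h1, h2, h3, h4, h5⟩ := σ.exists_pq hn2
    exact σ.build p q h1 h2 h3 h4 h5
  · have hn : 0 < n := σ.hn
    set i0 : Fin n := ⟨0, hn⟩ with hi0def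
    have hall : ∀ i : Fin n, i = i0 := by
      intro i
      apply Fin.ext
      have := i.isLt
      omega
    have huniv : (Finset.univ : Finset (Fin n)) = {i0} := by
      ext i
      simp [hall i]
    have hf1 : σ.f i0 = 1 := by
      have he := σ.e0_one
      rw [e0, huniv, Finset.sum_singleton] at he
      exact he
    have hw1 : ∀ i j, σ.w i j = 1 := by
      intro i j
      rw [hall i, hall j]
      exact hf1
    set p : Fin n → (Fin n ⊕ Fin n → F) := fun _ => Pi.single (Sum.inl i0) 1 with hpdef
    set q : Fin n → (Fin n ⊕ Fin n → F) := fun _ => Pi.single (Sum.inr i0) 1 with hqdef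
    have homval : ∀ (x y : Fin n ⊕ Fin n),
        om (Pi.single x (1:F)) (Pi.single y 1) = sympMat n F x y := by
      intro x y
      unfold om
      rw [Matrix.mulVec_single, single_dotProduct]
      simp
    apply σ.build p q
    · intro i j l
      rw [hw1, Matrix.one_mulVec, if_pos (by rw [hall j, hall l])]
    · intro i j l
      rw [hw1, Matrix.one_mulVec, if_pos (by rw [hall i, hall l])]
    · intro i j
      rw [if_pos (by rw [hall i, hall j])]
      have := homval (Sum.inl i0) (Sum.inr i0)
      rw [hpdef, hqdef]
      simp only []
      rw [this]
      simp [sympMat, Matrix.one_apply]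
    · intro i j
      have := homval (Sum.inl i0) (Sum.inl i0)
      rw [hpdef]
      simp only []
      rw [this]
      simp [sympMat]
    · intro i j
      have := homval (Sum.inr i0) (Sum.inr i0)
      rw [hqdef]
      simp only []
      rw [this]
      simp [sympMat]

end JSys

end St3


/-- A Jordan subalgebra of `H(F_{2n}, j)` isomorphic to
`F_n^(+)` can be brought, by an automorphism of `H(F_{2n}, j)` (conjugation by
a symplectic matrix), to the form of all block-diagonal matrices
`diag(X, Xᵀ)` with `X` an arbitrary `n × n` matrix. -/
theorem statement3 {F : Type*} [Field F] [IsAlgClosed F] (hF : (2 : F) ≠ 0)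
    (n : ℕ) (hn : 0 < n)
    (J : Submodule F (Matrix (Fin n ⊕ Fin n) (Fin n ⊕ Fin n) F))
    (hJsub : J ≤ sympSub n F)
    (hJ : IsJordanSubalgebra J)
    (hiso : JordanIso J (⊤ : Submodule F (Matrix (Fin n) (Fin n) F))) :
    ∃ Q : Matrix (Fin n ⊕ Fin n) (Fin n ⊕ Fin n) F,
      Qᵀ * sympMat n F * Q = sympMat n F ∧
      (fun X => Q⁻¹ * X * Q) '' (J : Set (Matrix (Fin n ⊕ Fin n) (Fin n ⊕ Fin n) F))
        = {M : Matrix (Fin n ⊕ Fin n) (Fin n ⊕ Fin n) F |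
            ∃ X : Matrix (Fin n) (Fin n) F, M = Matrix.fromBlocks X 0 0 Xᵀ} := by
  classical
  obtain ⟨e, he⟩ := hiso
  set φ : Matrix (Fin n) (Fin n) F →ₗ[F] Matrix (Fin n ⊕ Fin n) (Fin n ⊕ Fin n) F :=
    J.subtype ∘ₗ (e.symm.toLinearMap ∘ₗ
      (Submodule.topEquiv (R := F)
        (M := Matrix (Fin n) (Fin n) F)).symm.toLinearMap) with hphidef
  have hφ_apply : ∀ X, φ X
      = ((e.symm (Submodule.topEquiv.symm X) : J) : Matrix (Fin n ⊕ Fin n) (Fin n ⊕ Fin n) F) :=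
    fun X => rfl
  have hφ_memJ : ∀ X, φ X ∈ J := fun X => (e.symm (Submodule.topEquiv.symm X)).2
  have hφ_surj : ∀ x ∈ J, ∃ X, φ X = x := by
    intro x hx
    refine ⟨Submodule.topEquiv (e ⟨x, hx⟩), ?_⟩
    rw [hφ_apply, LinearEquiv.symm_apply_apply, LinearEquiv.symm_apply_apply]
  have hφ_inj : ∀ X, φ X = 0 → X = 0 := by
    intro X h
    have h1 : e.symm (Submodule.topEquiv.symm X) = 0 := by
      apply Subtype.ext
      exact h
    have h2 : (Submodule.topEquiv.symm X :
        (⊤ : Submodule F (Matrix (Fin n) (Fin n) F))) = 0 := by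
      have hz : e (0 : J) = 0 := by
        have := LinearMap.map_zero (e.toLinearMap)
        simpa using this
      rw [← LinearEquiv.apply_symm_apply e (Submodule.topEquiv.symm X), h1, hz]
    have h3 := congrArg (Subtype.val) h2
    simpa using h3
  have hφ_jordan : ∀ X Y, jmul (φ X) (φ Y) = φ (jmul X Y) := by
    intro X Y
    set x : J := e.symm (Submodule.topEquiv.symm X) with hxdef
    set y : J := e.symm (Submodule.topEquiv.symm Y) with hydef
    have hz : jmul (x : Matrix (Fin n ⊕ Fin n) (Fin n ⊕ Fin n) F) (y : _) ∈ J :=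
      hJ _ x.2 _ y.2
    have hkey := he x y ⟨_, hz⟩ rfl
    have hex : ((e x : (⊤ : Submodule F (Matrix (Fin n) (Fin n) F))) :
        Matrix (Fin n) (Fin n) F) = X := by
      rw [hxdef]
      simp
    have hey : ((e y : (⊤ : Submodule F (Matrix (Fin n) (Fin n) F))) :
        Matrix (Fin n) (Fin n) F) = Y := by
      rw [hydef]
      simp
    rw [hex, hey] at hkey
    have h4 : e ⟨_, hz⟩ = Submodule.topEquiv.symm (jmul X Y) := by
      apply Subtype.ext
      rw [← hkey]
      simp
    have h5 : (⟨_, hz⟩ : J) = e.symm (Submodule.topEquiv.symm (jmul X Y)) := by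
      rw [← h4, LinearEquiv.symm_apply_apply]
    have h6 := congrArg (Subtype.val) h5
    rw [hφ_apply, hφ_apply, hφ_apply]
    exact h6
  have hφ_mul : ∀ X Y, φ X * φ Y + φ Y * φ X = φ (X * Y + Y * X) := by
    intro X Y
    have h := hφ_jordan X Y
    unfold jmul at h
    rw [LinearMap.map_smul] at h
    have h2 := congrArg (fun z => (2:F) • z) h
    simp only [smul_smul] at h2
    rw [mul_inv_cancel₀ hF, one_smul, one_smul] at h2
    exact h2
  have hw : ∀ i j k l, φ (Matrix.single i j 1) * φ (Matrix.single k l 1)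
      + φ (Matrix.single k l 1) * φ (Matrix.single i j 1)
      = (if j = k then φ (Matrix.single i l 1) else 0)
        + (if l = i then φ (Matrix.single k j 1) else 0) := by
    intro i j k l
    have hprod1 : Matrix.single i j (1:F) * Matrix.single k l 1
        = if j = k then Matrix.single i l 1 else 0 := by
      split_ifs with h
      · subst h
        simpa using Matrix.single_mul_single_same (c := (1:F)) i j l 1
      · exact Matrix.single_mul_single_of_ne (c := (1:F)) i j k h 1
    have hprod2 : Matrix.single k l (1:F) * Matrix.single i j 1
        = if l = i then Matrix.single k j 1 else 0 := by
      split_ifs with h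
      · subst h
        simpa using Matrix.single_mul_single_same (c := (1:F)) k l j 1
      · exact Matrix.single_mul_single_of_ne (c := (1:F)) k l i h 1
    rw [hφ_mul, hprod1, hprod2, map_add, apply_ite φ, apply_ite φ, map_zero]
  have hsa : ∀ i j, (φ (Matrix.single i j 1))ᵀ * sympMat n F
      = sympMat n F * φ (Matrix.single i j 1) := by
    intro i j
    exact hJsub (hφ_memJ (Matrix.single i j 1))
  have hne : ∀ i, φ (Matrix.single i i 1) ≠ 0 := by
    intro i h
    have h1 := hφ_inj _ h
    have h2 := congrFun (congrFun h1 i) i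
    simp [Matrix.single] at h2
  set σ : St3.JSys F n :=
    ⟨fun i j => φ (Matrix.single i j 1), hF, hn, hw, hsa, hne⟩ with hσdef
  obtain ⟨Q, hQS, hQdet, hQmain⟩ := σ.exists_Q
  have hφ_sum : ∀ X : Matrix (Fin n) (Fin n) F,
      φ X = ∑ i, ∑ j, X i j • φ (Matrix.single i j 1) := by
    intro X
    conv_lhs => rw [Matrix.matrix_eq_sum_single X]
    rw [map_sum]
    refine Finset.sum_congr rfl fun i _ => ?_
    rw [map_sum]
    refine Finset.sum_congr rfl fun j _ => ?_
    rw [show Matrix.single i j (X i j)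
        = X i j • Matrix.single i j (1:F) by
      rw [Matrix.smul_single, smul_eq_mul, mul_one], LinearMap.map_smul]
  have hmain : ∀ X : Matrix (Fin n) (Fin n) F,
      φ X * Q = Q * Matrix.fromBlocks X 0 0 Xᵀ := by
    intro X
    rw [hφ_sum X]
    exact hQmain X
  have hconj : ∀ X : Matrix (Fin n) (Fin n) F,
      Q⁻¹ * φ X * Q = Matrix.fromBlocks X 0 0 Xᵀ := by
    intro X
    calc Q⁻¹ * φ X * Q = Q⁻¹ * (φ X * Q) := by rw [Matrix.mul_assoc]
      _ = Q⁻¹ * (Q * Matrix.fromBlocks X 0 0 Xᵀ) := by rw [hmain X]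
      _ = (Q⁻¹ * Q) * Matrix.fromBlocks X 0 0 Xᵀ := by rw [Matrix.mul_assoc]
      _ = Matrix.fromBlocks X 0 0 Xᵀ := by rw [Matrix.nonsing_inv_mul Q hQdet, one_mul]
  refine ⟨Q, hQS, ?_⟩
  ext M
  simp only [Set.mem_image, Set.mem_setOf_eq, SetLike.mem_coe]
  constructor
  · rintro ⟨x, hxJ, rfl⟩
    obtain ⟨X, hX⟩ := hφ_surj x hxJ
    exact ⟨X, by rw [← hX, hconj X]⟩
  · rintro ⟨X, rfl⟩
    exact ⟨φ X, hφ_memJ X, hconj X⟩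
end
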